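/- arXiv:1802.10225 — 6 statements merged into one kernel-verified Lean document; each statement's English description precedes it below -/
import Mathlib

section
/- Let N be a standard normal random variable and for each positive integer k define c₁(k) := √(2k−1)/‖N‖_{2k}, where ‖N‖_{2k} := (E[N^{2k}])^{1/(2k)} = ((2k)!/(2^k k!))^{1/(2k)}. Then c₁ is strictly increasing in k, c₁(1) = 1, and lim_{k→∞} c₁(k) = √e. -/
open Real Filter

/-! The quantity `L k = log (c₁ k ^ (2k)) = k log (2k-1) - log ((2k-1)!!)` satisfies `L 1 = 0` and
`L (k+1) - L k = k log ((2k+1)/(2k-1))`. The series `log ((1+x)/(1-x)) = 2 ∑ x^(2n+1)/(2n+1)` at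
`x = 1/(2k)` puts each increment in `[1, 4k²/(4k²-1)]`, hence `k - 1 ≤ L k ≤ 2k(k-1)/(2k-1) < k`.
So `log c₁ k = L k / (2k) → 1/2`, and `log c₁` increases because
`k L (k+1) - (k+1) L k = k · (k log ((2k+1)/(2k-1))) - L k ≥ k - L k > 0`. -/

/-- The `2k`-norm of a standard normal random variable: `(E N^{2k})^{1/(2k)}`,
with `E N^{2k} = (2k)! / (2^k k!)`. -/
noncomputable def normalNorm (k : ℕ) : ℝ :=
  (((2 * k).factorial : ℝ) / (2 ^ k * (k.factorial : ℝ))) ^ ((2 * (k : ℝ))⁻¹)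

/-- `c₁(k) := √(2k−1) / ‖N‖_{2k}`. -/
noncomputable def c₁ (k : ℕ) : ℝ := Real.sqrt (2 * (k : ℝ) - 1) / normalNorm k

namespace Real

theorem two_mul_le_log_one_add_sub_log_one_sub {x : ℝ} (hx₀ : 0 ≤ x) (hx₁ : x < 1) :
    2 * x ≤ log (1 + x) - log (1 - x) := by
  have hsum := hasSum_log_sub_log_of_abs_lt_one (abs_lt.2 ⟨by linarith, hx₁⟩)
  simpa using le_hasSum hsum 0 fun k _ ↦ by positivity

theorem log_one_add_sub_log_one_sub_le {x : ℝ} (hx₀ : 0 ≤ x) (hx₁ : x < 1) :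
    log (1 + x) - log (1 - x) ≤ 2 * x / ((1 - x) * (1 + x)) := by
  have hsum := hasSum_log_sub_log_of_abs_lt_one (abs_lt.2 ⟨by linarith, hx₁⟩)
  have hgeom := (hasSum_geometric_of_lt_one (sq_nonneg x) (by nlinarith)).mul_left (2 * x)
  refine (hasSum_le (fun k ↦ ?_) hsum hgeom).trans_eq (by ring)
  have hk : (1 : ℝ) ≤ 2 * k + 1 := by linarith [k.cast_nonneg (α := ℝ)]
  calc 2 * (1 / (2 * (k : ℝ) + 1)) * x ^ (2 * k + 1) = 2 * x * (x ^ 2) ^ k / (2 * k + 1) := by ring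
    _ ≤ 2 * x * (x ^ 2) ^ k := div_le_self (by positivity) hk

theorem log_two_mul_add_one_sub_log_two_mul_sub_one {y : ℝ} (hy : 1 ≤ y) :
    log (2 * y + 1) - log (2 * y - 1) = log (1 + (2 * y)⁻¹) - log (1 - (2 * y)⁻¹) := by
  have hy0 : 2 * y ≠ 0 := by positivity
  rw [show 1 + (2 * y)⁻¹ = (2 * y + 1) / (2 * y) by field_simp,
    show 1 - (2 * y)⁻¹ = (2 * y - 1) / (2 * y) by field_simp,
    log_div (by positivity) hy0, log_div (by linarith) hy0]
  ring

theorem one_le_mul_log_two_mul_add_one_sub {y : ℝ} (hy : 1 ≤ y) :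
    1 ≤ y * (log (2 * y + 1) - log (2 * y - 1)) := by
  have hx : (2 * y)⁻¹ < 1 := inv_lt_one_of_one_lt₀ (by linarith)
  have h := two_mul_le_log_one_add_sub_log_one_sub (by positivity) hx
  rw [log_two_mul_add_one_sub_log_two_mul_sub_one hy]
  calc (1 : ℝ) = y * (2 * (2 * y)⁻¹) := by field_simp
    _ ≤ _ := by gcongr

theorem mul_log_two_mul_add_one_sub_le {y : ℝ} (hy : 1 ≤ y) :
    y * (log (2 * y + 1) - log (2 * y - 1)) ≤ 4 * y ^ 2 / ((2 * y - 1) * (2 * y + 1)) := by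
  have hx : (2 * y)⁻¹ < 1 := inv_lt_one_of_one_lt₀ (by linarith)
  have h := log_one_add_sub_log_one_sub_le (by positivity) hx
  rw [log_two_mul_add_one_sub_log_two_mul_sub_one hy]
  have h₁ : 2 * y - 1 ≠ 0 := by linarith
  have h₂ : 2 * y + 1 ≠ 0 := by linarith
  calc _ ≤ y * (2 * (2 * y)⁻¹ / ((1 - (2 * y)⁻¹) * (1 + (2 * y)⁻¹))) := by gcongr
    _ = _ := by field_simp; norm_num

end Real

noncomputable def normalMoment (k : ℕ) : ℝ :=
  ((2 * k).factorial : ℝ) / (2 ^ k * (k.factorial : ℝ))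

theorem normalMoment_pos (k : ℕ) : 0 < normalMoment k := by
  unfold normalMoment; positivity

theorem normalMoment_succ (k : ℕ) : normalMoment (k + 1) = (2 * k + 1) * normalMoment k := by
  rw [normalMoment, normalMoment, show 2 * (k + 1) = 2 * k + 1 + 1 by ring,
    Nat.factorial_succ, Nat.factorial_succ, Nat.factorial_succ]
  push_cast
  field_simp
  ring

theorem normalNorm_eq (k : ℕ) : normalNorm k = normalMoment k ^ (2 * (k : ℝ))⁻¹ := rfl

noncomputable def logMomentRatio (k : ℕ) : ℝ :=
  k * log (2 * k - 1) - log (normalMoment k)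

theorem log_c₁ {k : ℕ} (hk : 1 ≤ k) : log (c₁ k) = logMomentRatio k / (2 * k) := by
  have hk' : (1 : ℝ) ≤ k := by exact_mod_cast hk
  have h : (0 : ℝ) < 2 * k - 1 := by linarith
  rw [c₁, normalNorm_eq, log_div (sqrt_pos.2 h).ne' (rpow_pos_of_pos (normalMoment_pos k) _).ne',
    log_rpow (normalMoment_pos k), log_sqrt h.le, logMomentRatio]
  field_simp

theorem c₁_pos {k : ℕ} (hk : 1 ≤ k) : 0 < c₁ k := by
  have hk' : (1 : ℝ) ≤ k := by exact_mod_cast hk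
  exact div_pos (sqrt_pos.2 (by linarith)) (rpow_pos_of_pos (normalMoment_pos k) _)

theorem logMomentRatio_one : logMomentRatio 1 = 0 := by
  norm_num [logMomentRatio, normalMoment]

theorem logMomentRatio_succ (k : ℕ) :
    logMomentRatio (k + 1) = logMomentRatio k + k * (log (2 * k + 1) - log (2 * k - 1)) := by
  rw [logMomentRatio, logMomentRatio, normalMoment_succ,
    log_mul (by positivity) (normalMoment_pos k).ne']
  push_cast
  ring_nf

theorem sub_one_le_logMomentRatio {k : ℕ} (hk : 1 ≤ k) : (k : ℝ) - 1 ≤ logMomentRatio k := by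
  induction k, hk using Nat.le_induction with
  | base => simp [logMomentRatio_one]
  | succ k hk ih =>
    have hstep := one_le_mul_log_two_mul_add_one_sub (y := k) (by exact_mod_cast hk)
    rw [logMomentRatio_succ]
    push_cast
    linarith

theorem logMomentRatio_le {k : ℕ} (hk : 1 ≤ k) :
    logMomentRatio k ≤ 2 * k * (k - 1) / (2 * k - 1) := by
  induction k, hk using Nat.le_induction with
  | base => norm_num [logMomentRatio_one]
  | succ k hk ih =>
    have hk' : (1 : ℝ) ≤ k := by exact_mod_cast hk
    have hstep := mul_log_two_mul_add_one_sub_le hk'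
    have h₁ : (2 * k - 1 : ℝ) ≠ 0 := by linarith
    have h₂ : (2 * k + 1 : ℝ) ≠ 0 := by linarith
    have hclosed : 2 * k * (k - 1) / (2 * k - 1) + 4 * k ^ 2 / ((2 * k - 1) * (2 * k + 1))
        = 2 * (k + 1) * k / (2 * k + 1 : ℝ) := by
      field_simp
      ring
    rw [logMomentRatio_succ]
    push_cast
    rw [show 2 * ((k : ℝ) + 1) - 1 = 2 * k + 1 by ring, add_sub_cancel_right]
    linarith

theorem logMomentRatio_lt {k : ℕ} (hk : 1 ≤ k) : logMomentRatio k < k := by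
  have hk' : (1 : ℝ) ≤ k := by exact_mod_cast hk
  refine (logMomentRatio_le hk).trans_lt ((div_lt_iff₀ (by linarith)).2 ?_)
  nlinarith

theorem c₁_lt_c₁_succ {k : ℕ} (hk : 1 ≤ k) : c₁ k < c₁ (k + 1) := by
  have hk' : (1 : ℝ) ≤ k := by exact_mod_cast hk
  rw [← log_lt_log_iff (c₁_pos hk) (c₁_pos (by omega)), log_c₁ hk, log_c₁ (by omega),
    logMomentRatio_succ, div_lt_div_iff₀ (by positivity) (by positivity)]
  have hstep := one_le_mul_log_two_mul_add_one_sub hk'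
  have hL := logMomentRatio_lt hk
  push_cast
  nlinarith

theorem c₁_strictMonoOn : StrictMonoOn c₁ (Set.Ici 1) :=
  strictMonoOn_of_lt_add_one Set.ordConnected_Ici fun _ _ hk _ ↦ c₁_lt_c₁_succ hk

theorem c₁_one : c₁ 1 = 1 := by
  norm_num [c₁, normalNorm]

theorem tendsto_log_c₁ : Tendsto (fun k ↦ log (c₁ k)) atTop (nhds (1 / 2)) := by
  have hlower : Tendsto (fun k : ℕ ↦ 1 / 2 - (1 / 2) / (k : ℝ)) atTop (nhds (1 / 2)) := by
    simpa using (tendsto_const_div_atTop_nhds_zero_nat (1 / 2 : ℝ)).const_sub (1 / 2 : ℝ)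
  refine tendsto_of_tendsto_of_tendsto_of_le_of_le' hlower tendsto_const_nhds ?_ ?_
  · filter_upwards [eventually_ge_atTop 1] with k hk
    have hk' : (1 : ℝ) ≤ k := by exact_mod_cast hk
    rw [log_c₁ hk, le_div_iff₀ (by positivity)]
    have := sub_one_le_logMomentRatio hk
    field_simp
    linarith
  · filter_upwards [eventually_ge_atTop 1] with k hk
    have hk' : (1 : ℝ) ≤ k := by exact_mod_cast hk
    rw [log_c₁ hk, div_le_iff₀ (by positivity)]
    linarith [logMomentRatio_lt hk]

theorem tendsto_c₁ : Tendsto c₁ atTop (nhds (√(exp 1))) := by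
  rw [← exp_half]
  refine ((continuous_exp.tendsto _).comp tendsto_log_c₁).congr' ?_
  filter_upwards [eventually_ge_atTop 1] with k hk
  exact exp_log (c₁_pos hk)

/-- **Lemma 1**: `c₁` is (strictly) increasing in `k ≥ 1`, with `c₁(1) = 1` and
`c₁(k) → √e` as `k → ∞`. -/
theorem stmt_4 :
    StrictMonoOn c₁ (Set.Ici 1) ∧ c₁ 1 = 1 ∧
      Tendsto c₁ atTop (nhds (Real.sqrt (Real.exp 1))) :=
  ⟨c₁_strictMonoOn, c₁_one, tendsto_c₁⟩
end

section
/- Let a > 1 and b, c > 0, and let X be a real random variable such that P(|X| > x) ≤ c·e^{−b(log(x+1))^a} for all x ≥ 0. Then there exist constants C₁(a,b) and C₂(a,b), depending only on a and b, such that for every positive integer k, E|X|^{2k} ≤ c·C₁(a,b)·k^{a/(2(a−1))}·exp{C₂(a,b)·k^{a/(a−1)}}. -/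
/-!
Cut `|X|` at the level `e^m` and split the rest into the shells `(e^(m+j), e^(m+j+1)]`, `j ∈ ℕ`.
The core contributes at most `e^(2km) P(|X| > 0) ≤ c e^(2km)`. On the `j`-th shell
`|X|^(2k) ≤ e^(2k(m+j+1))`, while the tail bound gives it probability at most
`c e^(-b (m+j)^a) ≤ c e^(-b m^(a-1) (m+j))`. Choosing `m = (4k/b)^(1/(a-1))`, i.e.
`b m^(a-1) = 4k`, makes the shell contributions at most `c e^(2k) 2^(-j)`, a geometric series.
Since `k m = (4/b)^(1/(a-1)) k^(a/(a-1))`, both parts are of the claimed size.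
-/

open MeasureTheory Real

lemma exists_nat_lt_le_add_one {t : ℝ} (ht : 0 < t) : ∃ j : ℕ, (j : ℝ) < t ∧ t ≤ j + 1 := by
  have hceil : 1 ≤ ⌈t⌉₊ := Nat.one_le_ceil_iff.mpr ht
  refine ⟨⌈t⌉₊ - 1, ?_, ?_⟩ <;> push_cast [hceil]
  · linarith [Nat.ceil_lt_add_one ht.le]
  · linarith [Nat.le_ceil t]

lemma ofReal_pow_le_indicator_add_tsum_indicator {x : ℝ} (hx : 0 ≤ x) {p : ℕ} (hp : p ≠ 0)
    (m : ℝ) :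
    ENNReal.ofReal (x ^ p) ≤ (Set.Ioi 0).indicator (fun _ => ENNReal.ofReal (exp m ^ p)) x
      + ∑' j : ℕ, (Set.Ioi (exp (m + j))).indicator
          (fun _ => ENNReal.ofReal (exp (m + j + 1) ^ p)) x := by
  rcases hx.eq_or_lt with rfl | hx0
  · simp [zero_pow hp]
  rcases le_or_gt x (exp m) with hxm | hxm
  · rw [Set.indicator_of_mem (Set.mem_Ioi.2 hx0)]
    exact le_add_right (ENNReal.ofReal_le_ofReal (pow_le_pow_left₀ hx hxm p))
  obtain ⟨j, hjt, htj⟩ :=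
    exists_nat_lt_le_add_one (sub_pos.2 ((lt_log_iff_exp_lt hx0).2 hxm))
  have hlow : exp (m + j) < x := (lt_log_iff_exp_lt hx0).1 (by linarith)
  have hhigh : x ≤ exp (m + j + 1) := by
    rw [← exp_log hx0]
    exact exp_le_exp.2 (by linarith)
  refine le_add_left (le_trans ?_ (ENNReal.le_tsum j))
  rw [Set.indicator_of_mem (Set.mem_Ioi.2 hlow)]
  exact ENNReal.ofReal_le_ofReal (pow_le_pow_left₀ hx hhigh p)

lemma lintegral_ofReal_abs_pow_le {Ω : Type*} [MeasurableSpace Ω] (μ : Measure Ω) {X : Ω → ℝ}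
    (hX : Measurable X) {p : ℕ} (hp : p ≠ 0) (m : ℝ) :
    ∫⁻ ω, ENNReal.ofReal (|X ω| ^ p) ∂μ
      ≤ ENNReal.ofReal (exp m ^ p) * μ {ω | 0 < |X ω|}
        + ∑' j : ℕ, ENNReal.ofReal (exp (m + j + 1) ^ p) * μ {ω | exp (m + j) < |X ω|} := by
  calc ∫⁻ ω, ENNReal.ofReal (|X ω| ^ p) ∂μ
      ≤ ∫⁻ ω, ((Set.Ioi 0).indicator (fun _ => ENNReal.ofReal (exp m ^ p)) |X ω|
          + ∑' j : ℕ, (Set.Ioi (exp (m + j))).indicator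
              (fun _ => ENNReal.ofReal (exp (m + j + 1) ^ p)) |X ω|) ∂μ :=
        lintegral_mono fun ω => ofReal_pow_le_indicator_add_tsum_indicator (abs_nonneg _) hp m
    _ = _ := by
        have hind (t : ℝ) (e : ENNReal) :
            Measurable fun ω => (Set.Ioi t).indicator (fun _ => e) |X ω| :=
          (measurable_const.indicator measurableSet_Ioi).comp hX.abs
        rw [lintegral_add_left (hind _ _), lintegral_tsum fun j => (hind _ _).aemeasurable]
        simp_rw [lintegral_indicator_const_comp hX.abs measurableSet_Ioi]
        rfl

lemma measure_exp_lt_abs_le {Ω : Type*} [MeasurableSpace Ω] {P : Measure Ω} {X : Ω → ℝ}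
    {a b c : ℝ} (ha : 0 ≤ a) (hb : 0 ≤ b) (hc : 0 ≤ c)
    (htail : ∀ x : ℝ, 0 ≤ x →
      P {ω | x < |X ω|} ≤ ENNReal.ofReal (c * exp (-b * log (x + 1) ^ a)))
    {s : ℝ} (hs : 0 ≤ s) :
    P {ω | exp s < |X ω|} ≤ ENNReal.ofReal (c * exp (-b * s ^ a)) := by
  refine (htail _ (exp_pos s).le).trans (ENNReal.ofReal_le_ofReal ?_)
  have hlog : s ≤ log (exp s + 1) := by
    rw [le_log_iff_exp_le (by positivity)]
    linarith
  have hpow : s ^ a ≤ log (exp s + 1) ^ a := rpow_le_rpow hs hlog ha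
  exact mul_le_mul_of_nonneg_left (exp_le_exp.2 (by nlinarith)) hc

lemma exponent_on_shell_le {a b k m s : ℝ} (ha : 1 ≤ a) (hb : 0 ≤ b) (hk : 1 ≤ k) (hm : 0 < m)
    (hs : 0 ≤ s) (hbm : b * m ^ (a - 1) = 4 * k) :
    2 * k * (m + s + 1) - b * (m + s) ^ a ≤ 2 * k - s := by
  have hpow : 4 * k * (m + s) ≤ b * (m + s) ^ a := by
    calc 4 * k * (m + s) = b * m ^ (a - 1) * (m + s) := by rw [hbm]
      _ ≤ b * (m + s) ^ (a - 1) * (m + s) := by gcongr; linarith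
      _ = b * (m + s) ^ a := by
        rw [mul_assoc, ← rpow_add_one' (by positivity) (by linarith), sub_add_cancel]
  nlinarith
lemma exp_pow_mul_tail_le_geometric {a b c m : ℝ} {k : ℕ} (ha : 1 ≤ a) (hb : 0 ≤ b)
    (hc : 0 ≤ c) (hk : 1 ≤ k) (hm : 0 < m) (hbm : b * m ^ (a - 1) = 4 * k) (j : ℕ) :
    exp (m + j + 1) ^ (2 * k) * (c * exp (-b * (m + j) ^ a))
      ≤ c * exp (2 * k) * (1 / 2) ^ j := by
  have hexp := exponent_on_shell_le ha hb (by exact_mod_cast hk) hm j.cast_nonneg hbm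
  calc exp (m + j + 1) ^ (2 * k) * (c * exp (-b * (m + j) ^ a))
      = c * exp (2 * k * (m + j + 1) - b * (m + j) ^ a) := by
        rw [← exp_nat_mul, mul_left_comm, ← exp_add]
        push_cast
        ring_nf
    _ ≤ c * exp (2 * k - j) := by gcongr
    _ = c * exp (2 * k) * exp (-1) ^ j := by
        rw [← exp_nat_mul, mul_assoc, ← exp_add]
        ring_nf
    _ ≤ c * exp (2 * k) * (1 / 2) ^ j := by
        gcongr
        exact exp_neg_one_lt_half.le

lemma tsum_shells_le {Ω : Type*} [MeasurableSpace Ω] {P : Measure Ω} {X : Ω → ℝ}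
    {a b c m : ℝ} {k : ℕ} (ha : 1 ≤ a) (hb : 0 ≤ b) (hc : 0 ≤ c) (hk : 1 ≤ k) (hm : 0 < m)
    (hbm : b * m ^ (a - 1) = 4 * k)
    (htail : ∀ x : ℝ, 0 ≤ x →
      P {ω | x < |X ω|} ≤ ENNReal.ofReal (c * exp (-b * log (x + 1) ^ a))) :
    ∑' j : ℕ, ENNReal.ofReal (exp (m + j + 1) ^ (2 * k)) * P {ω | exp (m + j) < |X ω|}
      ≤ ENNReal.ofReal (2 * c * exp (2 * k)) := by
  calc ∑' j : ℕ, ENNReal.ofReal (exp (m + j + 1) ^ (2 * k)) * P {ω | exp (m + j) < |X ω|}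
      ≤ ∑' j : ℕ, ENNReal.ofReal (c * exp (2 * k) * (1 / 2) ^ j) := by
        refine ENNReal.tsum_le_tsum fun j => ?_
        calc ENNReal.ofReal (exp (m + j + 1) ^ (2 * k)) * P {ω | exp (m + j) < |X ω|}
            ≤ ENNReal.ofReal (exp (m + j + 1) ^ (2 * k))
                * ENNReal.ofReal (c * exp (-b * (m + j) ^ a)) := by
              gcongr
              exact measure_exp_lt_abs_le (by linarith) hb hc htail (by positivity)
          _ = ENNReal.ofReal (exp (m + j + 1) ^ (2 * k) * (c * exp (-b * (m + j) ^ a))) :=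
              (ENNReal.ofReal_mul (by positivity)).symm
          _ ≤ _ := ENNReal.ofReal_le_ofReal
              (exp_pow_mul_tail_le_geometric ha hb hc hk hm hbm j)
    _ = ENNReal.ofReal (2 * c * exp (2 * k)) := by
        rw [← ENNReal.ofReal_tsum_of_nonneg (fun j => by positivity)
          (summable_geometric_two.mul_left _), tsum_mul_left, tsum_geometric_two, mul_comm]
        ring_nf

lemma core_add_shells_le {a b c k : ℝ} (ha : 1 < a) (hb : 0 < b) (hc : 0 ≤ c) (hk : 1 ≤ k) :
    c * exp (2 * k * (4 * k / b) ^ (a - 1)⁻¹) + 2 * c * exp (2 * k)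
      ≤ c * 3 * k ^ (a / (2 * (a - 1)))
        * exp ((2 * (4 / b) ^ (a - 1)⁻¹ + 2) * k ^ (a / (a - 1))) := by
  have ha1 : 0 < a - 1 := sub_pos.2 ha
  have hk0 : 0 < k := by linarith
  have hkpow : k ^ (a / (a - 1)) = k * k ^ (a - 1)⁻¹ := by
    rw [show a / (a - 1) = 1 + (a - 1)⁻¹ by field_simp; ring, rpow_add hk0, rpow_one]
  have hcore : 2 * k * (4 * k / b) ^ (a - 1)⁻¹
      = 2 * (4 / b) ^ (a - 1)⁻¹ * k ^ (a / (a - 1)) := by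
    rw [hkpow, mul_div_right_comm, mul_rpow (by positivity) hk0.le]
    ring
  have hk_le : k ≤ k ^ (a / (a - 1)) := by
    rw [hkpow]
    exact le_mul_of_one_le_right hk0.le (one_le_rpow hk (by positivity))
  have hB : 0 ≤ (4 / b) ^ (a - 1)⁻¹ * k ^ (a / (a - 1)) := by positivity
  have h1 : exp (2 * k * (4 * k / b) ^ (a - 1)⁻¹)
      ≤ exp ((2 * (4 / b) ^ (a - 1)⁻¹ + 2) * k ^ (a / (a - 1))) :=
    exp_le_exp.2 (by rw [hcore]; nlinarith)
  have h2 : exp (2 * k) ≤ exp ((2 * (4 / b) ^ (a - 1)⁻¹ + 2) * k ^ (a / (a - 1))) :=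
    exp_le_exp.2 (by nlinarith)
  have h3 : 1 ≤ k ^ (a / (2 * (a - 1))) := one_le_rpow hk (by positivity)
  calc c * exp (2 * k * (4 * k / b) ^ (a - 1)⁻¹) + 2 * c * exp (2 * k)
      ≤ c * 3 * 1 * exp ((2 * (4 / b) ^ (a - 1)⁻¹ + 2) * k ^ (a / (a - 1))) := by
        nlinarith [mul_le_mul_of_nonneg_left h1 hc, mul_le_mul_of_nonneg_left h2 hc]
    _ ≤ _ := by gcongr

/-- **Lemma 2, second part**: a log-Weibull tail bound yields moment bounds with constants
depending only on `a` and `b`. -/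
theorem stmt_6 (a b : ℝ) (ha : 1 < a) (hb : 0 < b) :
    ∃ C₁ C₂ : ℝ, 0 < C₁ ∧ 0 < C₂ ∧
      ∀ (c : ℝ), 0 < c →
      ∀ {Ω : Type} [MeasurableSpace Ω] (P : Measure Ω), IsProbabilityMeasure P →
      ∀ (X : Ω → ℝ), Measurable X →
      (∀ x : ℝ, 0 ≤ x →
        P {ω | x < |X ω|} ≤ ENNReal.ofReal (c * Real.exp (-b * (Real.log (x + 1)) ^ a))) →
      ∀ (k : ℕ), 1 ≤ k →
        ∫⁻ ω, ENNReal.ofReal (|X ω| ^ (2 * k)) ∂P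
          ≤ ENNReal.ofReal (c * C₁ * (k : ℝ) ^ (a / (2 * (a - 1)))
              * Real.exp (C₂ * (k : ℝ) ^ (a / (a - 1)))) := by
  have ha1 : 0 < a - 1 := sub_pos.2 ha
  refine ⟨3, 2 * (4 / b) ^ (a - 1)⁻¹ + 2, by norm_num, by positivity, ?_⟩
  intro c hc Ω _ P _ X hX htail k hk
  set m := (4 * (k : ℝ) / b) ^ (a - 1)⁻¹ with hm
  have hm0 : 0 < m := by positivity
  have hbm : b * m ^ (a - 1) = 4 * k := by
    rw [hm, rpow_inv_rpow (by positivity) ha1.ne']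
    field_simp
  have hcore : P {ω | 0 < |X ω|} ≤ ENNReal.ofReal c := by
    simpa [zero_rpow (by linarith : a ≠ 0)] using htail 0 le_rfl
  calc ∫⁻ ω, ENNReal.ofReal (|X ω| ^ (2 * k)) ∂P
      ≤ ENNReal.ofReal (exp m ^ (2 * k)) * P {ω | 0 < |X ω|}
        + ∑' j : ℕ, ENNReal.ofReal (exp (m + j + 1) ^ (2 * k)) * P {ω | exp (m + j) < |X ω|} :=
        lintegral_ofReal_abs_pow_le P hX (by omega) m
    _ ≤ ENNReal.ofReal (exp m ^ (2 * k)) * ENNReal.ofReal c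
        + ENNReal.ofReal (2 * c * exp (2 * k)) := by
        gcongr
        exact tsum_shells_le ha.le hb.le hc.le hk hm0 hbm htail
    _ = ENNReal.ofReal (c * exp (2 * k * m) + 2 * c * exp (2 * k)) := by
        rw [← ENNReal.ofReal_mul (by positivity), ← ENNReal.ofReal_add (by positivity)
          (by positivity), ← exp_nat_mul]
        push_cast
        ring_nf
    _ ≤ _ := ENNReal.ofReal_le_ofReal (core_add_shells_le ha hb hc.le (by exact_mod_cast hk))
end

section
/- Let X₁, …, X_n be real random variables with mean zero and E|X_i|^{2k} < ∞ for all i, for a fixed positive integer k, and suppose that for each i there is a set 𝒩_i ⊆ {1,…,n} with i ∈ 𝒩_i such that X_i is independent of W − Σ_{j∈𝒩_i} X_j, where W := Σ_{i=1}^n X_i. Let d := max_i |𝒩_i| and x := max_i ‖X_i‖_{2k}. Then ‖W‖_{2k} ≤ n x·[(1 + √(d/(n(2k−1))))^{2k−1} − 1] ≤ √n·x·√(d(2k−1))·exp{√(d(2k−1)/n)}. -/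
open MeasureTheory ProbabilityTheory Real

/-- `(E |X|^r)^(1/r)`, the `r`-norm of a real random variable. -/
noncomputable def rnorm {Ω : Type*} [MeasurableSpace Ω] (P : Measure Ω) (X : Ω → ℝ) (r : ℕ) : ℝ :=
  (∫ ω, |X ω| ^ r ∂P) ^ ((r : ℝ)⁻¹)

/-!
With `p = 2k - 1`, `W = ∑ i, X i` and `Y i = ∑ j ∈ 𝒩 i, X j`, the moment `E W^(p+1)` equals
`∑ i, E[X i * W^p]`. Since `X i` is centred and independent of `W - Y i`, we have
`E[X i * (W - Y i)^p] = 0`; subtracting the binomial expansion of `(W - Y i)^p` and bounding each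
remaining term by Hölder gives, for `s = ‖W‖_{p+1}` and `‖Y i‖_{p+1} ≤ d x`,
`s^(p+1) ≤ n x ((s + d x)^p - s^p)`.

Divided by `s^p` this reads `s ≤ n x ((1 + d x / s)^p - 1)`. By Bernoulli,
`s₀ = n x ((1 + c)^p - 1)` with `c = √(d / (n p))` is at least `n x p c`, so
`d x = n x p c² ≤ c s₀`; hence `d x / s ≤ c` whenever `s > s₀`, which makes `s > s₀` impossible.
The second bound is `(1 + c)^p - 1 ≤ p c e^(p c)`.
-/

section Lp

variable {Ω : Type*} [MeasurableSpace Ω] {μ : Measure Ω} {f g h : Ω → ℝ} {m b c : ℕ}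

variable (μ f m) in
lemma rnorm_nonneg : 0 ≤ rnorm μ f m :=
  Real.rpow_nonneg (integral_nonneg fun _ => by positivity) _

variable (μ f m) in
lemma rnorm_neg : rnorm μ (fun ω => -f ω) m = rnorm μ f m := by
  simp [rnorm]

lemma rnorm_eq_toReal_eLpNorm (hm : m ≠ 0) (hf : AEStronglyMeasurable f μ) :
    rnorm μ f m = (eLpNorm f m μ).toReal := by
  rw [eLpNorm_eq_lintegral_rpow_enorm_toReal (by exact_mod_cast hm) (ENNReal.natCast_ne_top m),
    ← ENNReal.toReal_rpow, rnorm, integral_eq_lintegral_of_nonneg_ae (f := fun ω => |f ω| ^ m)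
      (.of_forall fun ω => by positivity) (by fun_prop)]
  simp [Real.enorm_eq_ofReal_abs, ENNReal.ofReal_pow]

lemma lintegral_prod_enorm_pow_le {ι : Type*} (s : Finset ι) {f : ι → Ω → ℝ}
    (hf : ∀ i ∈ s, AEStronglyMeasurable (f i) μ) {a : ι → ℕ} (ha : ∑ i ∈ s, a i = m)
    (hm : m ≠ 0) :
    ∫⁻ ω, ∏ i ∈ s, ‖f i ω‖ₑ ^ a i ∂μ ≤ ∏ i ∈ s, eLpNorm (f i) m μ ^ a i := by
  have hmR : (m : ℝ) ≠ 0 := by exact_mod_cast hm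
  have := ENNReal.lintegral_prod_norm_pow_le s (μ := μ) (f := fun i ω => ‖f i ω‖ₑ ^ (m : ℝ))
    (fun i hi => (hf i hi).enorm.pow_const _) (p := fun i => a i / m)
    (by rw [← Finset.sum_div, ← Nat.cast_sum, ha, div_self hmR]) (fun i _ => by positivity)
  simpa [eLpNorm_eq_lintegral_rpow_enorm_toReal (by exact_mod_cast hm) (ENNReal.natCast_ne_top m),
    ← ENNReal.rpow_mul, ← ENNReal.rpow_natCast, hmR, div_eq_inv_mul] using this

lemma rnorm_pow_eq_integral_pow (hm : Even m) (hm0 : m ≠ 0) :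
    rnorm μ f m ^ m = ∫ ω, f ω ^ m ∂μ := by
  rw [rnorm, Real.rpow_inv_natCast_pow (integral_nonneg fun _ => by positivity) hm0]
  simp only [hm.pow_abs]

lemma memLp_of_integrable_abs_pow (hm : m ≠ 0) (hf : AEStronglyMeasurable f μ)
    (hfm : Integrable (fun ω => |f ω| ^ m) μ) : MemLp f m μ :=
  (integrable_norm_rpow_iff hf (by exact_mod_cast hm) (ENNReal.natCast_ne_top m)).mp
    (by simpa using hfm)

lemma rnorm_sum_le {ι : Type*} (s : Finset ι) {f : ι → Ω → ℝ} (hm : 1 ≤ m)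
    (hf : ∀ i ∈ s, MemLp (f i) m μ) :
    rnorm μ (fun ω => ∑ i ∈ s, f i ω) m ≤ ∑ i ∈ s, rnorm μ (f i) m := by
  have hm0 : m ≠ 0 := by omega
  rw [rnorm_eq_toReal_eLpNorm hm0 (memLp_finsetSum s hf).1, Finset.sum_congr rfl fun i hi =>
    rnorm_eq_toReal_eLpNorm hm0 (hf i hi).1, ← ENNReal.toReal_sum fun i hi => (hf i hi).2.ne]
  exact ENNReal.toReal_mono (ENNReal.sum_ne_top.mpr fun i hi => (hf i hi).2.ne)
    (by simpa only [Finset.sum_fn] using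
      eLpNorm_sum_le (p := m) (fun i hi => (hf i hi).1) (by exact_mod_cast hm))

lemma lintegral_enorm_mul_pow_mul_pow_le (hm : 1 + b + c = m)
    (hf : AEStronglyMeasurable f μ) (hg : AEStronglyMeasurable g μ)
    (hh : AEStronglyMeasurable h μ) :
    ∫⁻ ω, ‖f ω * g ω ^ b * h ω ^ c‖ₑ ∂μ
      ≤ eLpNorm f m μ * eLpNorm g m μ ^ b * eLpNorm h m μ ^ c := by
  have := lintegral_prod_enorm_pow_le (μ := μ) Finset.univ (f := ![f, g, h]) (a := ![1, b, c])
    (m := m) (by simp [Fin.forall_fin_succ, hf, hg, hh]) (by simp [Fin.sum_univ_three, hm])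
    (by omega)
  simpa [Fin.prod_univ_three, enorm_mul, enorm_pow, mul_assoc] using this

lemma MeasureTheory.MemLp.integrable_mul_pow_mul_pow (hm : 1 + b + c = m) (hf : MemLp f m μ)
    (hg : MemLp g m μ) (hh : MemLp h m μ) :
    Integrable (fun ω => f ω * g ω ^ b * h ω ^ c) μ := by
  refine ⟨(hf.1.mul (hg.1.pow b)).mul (hh.1.pow c),
    (lintegral_enorm_mul_pow_mul_pow_le hm hf.1 hg.1 hh.1).trans_lt ?_⟩
  have := hf.2; have := hg.2; have := hh.2
  finiteness

lemma MeasureTheory.MemLp.integrable_mul_pow (hm : 1 + b = m) (hf : MemLp f m μ)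
    (hg : MemLp g m μ) : Integrable (fun ω => f ω * g ω ^ b) μ := by
  simpa using hf.integrable_mul_pow_mul_pow (c := 0) (by omega) hg hg

lemma abs_integral_mul_pow_mul_pow_le (hm : 1 + b + c = m) (hf : MemLp f m μ)
    (hg : MemLp g m μ) (hh : MemLp h m μ) :
    |∫ ω, f ω * g ω ^ b * h ω ^ c ∂μ| ≤ rnorm μ f m * rnorm μ g m ^ b * rnorm μ h m ^ c := by
  have hm0 : m ≠ 0 := by omega
  calc |∫ ω, f ω * g ω ^ b * h ω ^ c ∂μ|
      ≤ ∫ ω, ‖f ω * g ω ^ b * h ω ^ c‖ ∂μ :=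
        norm_integral_le_integral_norm (fun ω => f ω * g ω ^ b * h ω ^ c)
    _ = (∫⁻ ω, ‖f ω * g ω ^ b * h ω ^ c‖ₑ ∂μ).toReal :=
        integral_norm_eq_lintegral_enorm ((hf.1.mul (hg.1.pow b)).mul (hh.1.pow c))
    _ ≤ (eLpNorm f m μ * eLpNorm g m μ ^ b * eLpNorm h m μ ^ c).toReal :=
        ENNReal.toReal_mono (by have := hf.2; have := hg.2; have := hh.2; finiteness)
          (lintegral_enorm_mul_pow_mul_pow_le hm hf.1 hg.1 hh.1)
    _ = rnorm μ f m * rnorm μ g m ^ b * rnorm μ h m ^ c := by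
        simp [rnorm_eq_toReal_eLpNorm hm0, hf.1, hg.1, hh.1]

end Lp

lemma pow_eq_sub_pow_sub_sum {R : Type*} [CommRing R] (a b : R) (p : ℕ) :
    a ^ p = (a - b) ^ p - ∑ j ∈ Finset.range p, a ^ j * (-b) ^ (p - j) * p.choose j := by
  have h := add_pow a (-b) p
  rw [Finset.sum_range_succ, Nat.sub_self, pow_zero, mul_one, Nat.choose_self, Nat.cast_one,
    mul_one, ← sub_eq_add_neg] at h
  rw [h]
  ring

section LocalDependence

variable {Ω : Type*} [MeasurableSpace Ω] {μ : Measure Ω} {X W Y : Ω → ℝ} {p : ℕ}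

lemma integral_mul_pow_eq_of_indepFun (hX : MemLp X (p + 1 : ℕ) μ) (hW : MemLp W (p + 1 : ℕ) μ)
    (hY : MemLp Y (p + 1 : ℕ) μ) (hmean : ∫ ω, X ω ∂μ = 0)
    (hind : IndepFun X (fun ω => W ω - Y ω) μ) :
    ∫ ω, X ω * W ω ^ p ∂μ
      = -∑ j ∈ Finset.range p, (∫ ω, X ω * W ω ^ j * (-Y ω) ^ (p - j) ∂μ) * p.choose j := by
  have hterm : ∀ j ∈ Finset.range p,
      Integrable (fun ω => X ω * W ω ^ j * (-Y ω) ^ (p - j)) μ := fun j hj =>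
    hX.integrable_mul_pow_mul_pow (by rw [Finset.mem_range] at hj; omega) hW hY.neg
  have hcentred : ∫ ω, X ω * (W ω - Y ω) ^ p ∂μ = 0 := by
    simpa [hmean] using
      (hind.comp measurable_id (measurable_id.pow_const p)).integral_fun_mul_eq_mul_integral
        hX.1 ((hW.1.sub hY.1).pow p)
  have hcentred_int : Integrable (fun ω => X ω * (W ω - Y ω) ^ p) μ :=
    hX.integrable_mul_pow (by omega) (hW.sub hY)
  calc ∫ ω, X ω * W ω ^ p ∂μ
      = ∫ ω, X ω * (W ω - Y ω) ^ p
          - ∑ j ∈ Finset.range p, X ω * W ω ^ j * (-Y ω) ^ (p - j) * p.choose j ∂μ := by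
        refine integral_congr_ae (.of_forall fun ω => ?_)
        simp only [pow_eq_sub_pow_sub_sum (W ω) (Y ω) p, mul_sub, Finset.mul_sum, mul_assoc]
    _ = _ := by
        rw [integral_sub hcentred_int (integrable_finsetSum _ fun j hj => (hterm j hj).mul_const _),
          hcentred, zero_sub, integral_finsetSum _ fun j hj => (hterm j hj).mul_const _]
        simp only [integral_mul_const]

lemma integral_mul_pow_le_of_indepFun (hX : MemLp X (p + 1 : ℕ) μ) (hW : MemLp W (p + 1 : ℕ) μ)
    (hY : MemLp Y (p + 1 : ℕ) μ) (hmean : ∫ ω, X ω ∂μ = 0)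
    (hind : IndepFun X (fun ω => W ω - Y ω) μ) {x y : ℝ}
    (hx : rnorm μ X (p + 1) ≤ x) (hy : rnorm μ Y (p + 1) ≤ y) :
    ∫ ω, X ω * W ω ^ p ∂μ
      ≤ x * ((rnorm μ W (p + 1) + y) ^ p - rnorm μ W (p + 1) ^ p) := by
  set s := rnorm μ W (p + 1)
  have hx0 : 0 ≤ x := (rnorm_nonneg μ X _).trans hx
  have hy0 : 0 ≤ y := (rnorm_nonneg μ Y _).trans hy
  have hs0 : 0 ≤ s := rnorm_nonneg μ W _
  rw [integral_mul_pow_eq_of_indepFun hX hW hY hmean hind, ← Finset.sum_neg_distrib,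
    add_pow, Finset.sum_range_succ, Nat.sub_self, pow_zero, mul_one, Nat.choose_self,
    Nat.cast_one, mul_one, add_sub_cancel_right, Finset.mul_sum]
  refine Finset.sum_le_sum fun j hj => ?_
  have hj : 1 + j + (p - j) = p + 1 := by rw [Finset.mem_range] at hj; omega
  calc -((∫ ω, X ω * W ω ^ j * (-Y ω) ^ (p - j) ∂μ) * p.choose j)
      ≤ |∫ ω, X ω * W ω ^ j * (-Y ω) ^ (p - j) ∂μ| * p.choose j := by
        rw [← neg_mul]; gcongr; exact neg_le_abs _
    _ ≤ rnorm μ X (p + 1) * s ^ j * rnorm μ Y (p + 1) ^ (p - j) * p.choose j := by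
        gcongr
        rw [← rnorm_neg μ Y]
        exact abs_integral_mul_pow_mul_pow_le hj hX hW hY.neg
    _ ≤ x * (s ^ j * y ^ (p - j) * p.choose j) := by
        rw [← mul_assoc, ← mul_assoc]; gcongr
        exacts [pow_nonneg (rnorm_nonneg μ Y _) _, rnorm_nonneg μ Y _]

lemma rnorm_sum_pow_succ_le {ι : Type*} [Fintype ι] {X : ι → Ω → ℝ} {N : ι → Finset ι}
    (hp : Even (p + 1)) (hX : ∀ i, MemLp (X i) (p + 1 : ℕ) μ)
    (hmean : ∀ i, ∫ ω, X i ω ∂μ = 0)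
    (hloc : ∀ i, IndepFun (X i) (fun ω => ∑ j, X j ω - ∑ j ∈ N i, X j ω) μ) {x y : ℝ}
    (hx : ∀ i, rnorm μ (X i) (p + 1) ≤ x)
    (hy : ∀ i, rnorm μ (fun ω => ∑ j ∈ N i, X j ω) (p + 1) ≤ y) :
    rnorm μ (fun ω => ∑ i, X i ω) (p + 1) ^ (p + 1)
      ≤ Fintype.card ι * x * ((rnorm μ (fun ω => ∑ i, X i ω) (p + 1) + y) ^ p
        - rnorm μ (fun ω => ∑ i, X i ω) (p + 1) ^ p) := by
  set W := fun ω => ∑ i, X i ω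
  have hW : MemLp W (p + 1 : ℕ) μ := memLp_finsetSum _ fun i _ => hX i
  calc rnorm μ W (p + 1) ^ (p + 1)
      = ∫ ω, W ω ^ (p + 1) ∂μ := rnorm_pow_eq_integral_pow hp (by omega)
    _ = ∑ i, ∫ ω, X i ω * W ω ^ p ∂μ := by
        rw [← integral_finsetSum _ fun i _ => (hX i).integrable_mul_pow (by omega) hW]
        simp only [pow_succ', W, Finset.sum_mul]
    _ ≤ ∑ i, x * ((rnorm μ W (p + 1) + y) ^ p - rnorm μ W (p + 1) ^ p) :=
        Finset.sum_le_sum fun i _ => integral_mul_pow_le_of_indepFun (hX i) hW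
          (memLp_finsetSum _ fun j _ => hX j) (hmean i) (hloc i) (hx i) (hy i)
    _ = _ := by rw [Finset.sum_const, nsmul_eq_mul, Finset.card_univ, mul_assoc]

end LocalDependence

lemma le_mul_one_add_pow_sub_one {N y c s : ℝ} {p : ℕ} (hN : 0 ≤ N) (hc : 0 ≤ c) (hy0 : 0 ≤ y)
    (hy : y ≤ N * p * c ^ 2) (h : s ^ (p + 1) ≤ N * ((s + y) ^ p - s ^ p)) :
    s ≤ N * ((1 + c) ^ p - 1) := by
  set s₀ := N * ((1 + c) ^ p - 1)
  by_contra! hlt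
  have hbern : N * p * c ≤ s₀ := by
    have := one_add_mul_le_pow (by linarith : -2 ≤ c) p
    nlinarith
  have hs₀ : 0 ≤ s₀ := (by positivity : 0 ≤ N * p * c).trans hbern
  have hspos : 0 < s := hs₀.trans_lt hlt
  have hys : s + y ≤ s * (1 + c) := by nlinarith
  have : s ^ p * s ≤ s ^ p * s₀ := calc
    s ^ p * s = s ^ (p + 1) := (pow_succ s p).symm
    _ ≤ N * ((s + y) ^ p - s ^ p) := h
    _ ≤ N * ((s * (1 + c)) ^ p - s ^ p) := by gcongr
    _ = s ^ p * s₀ := by rw [mul_pow]; ring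
  exact hlt.not_ge (le_of_mul_le_mul_left this (by positivity))

lemma one_add_pow_sub_one_le_mul_exp {a : ℝ} (ha : 0 ≤ a) (p : ℕ) :
    (1 + a) ^ p - 1 ≤ p * a * exp (p * a) := by
  have hpow : (1 + a) ^ p ≤ exp (p * a) := by
    rw [Real.exp_nat_mul]
    gcongr
    linarith [Real.add_one_le_exp a]
  have hexp : exp (p * a) - 1 ≤ p * a * exp (p * a) := by
    have := Real.add_one_le_exp (-(p * a))
    rw [Real.exp_neg] at this
    have hpos := Real.exp_pos (p * a)
    field_simp at this
    nlinarith
  linarith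

lemma mul_one_add_sqrt_pow_sub_one_le {n : ℝ} (hn : 0 < n) (d : ℝ) (p : ℕ) :
    n * ((1 + √(d / (n * p))) ^ p - 1) ≤ √n * √(d * p) * exp (√(d * p / n)) := by
  have hsqrt : p * √(d / (n * p)) = √(d * p / n) := by
    rcases Nat.eq_zero_or_pos p with rfl | hp
    · simp
    rw [show d * p / n = p ^ 2 * (d / (n * p)) by field_simp, Real.sqrt_mul (by positivity),
      Real.sqrt_sq (by positivity)]
  have hn' : n * √(d * p / n) = √n * √(d * p) := by
    rw [Real.sqrt_div' _ hn.le, mul_div_assoc', mul_comm, mul_div_assoc, Real.div_sqrt, mul_comm]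
  calc n * ((1 + √(d / (n * p))) ^ p - 1)
      ≤ n * (p * √(d / (n * p)) * exp (p * √(d / (n * p)))) := by
        gcongr; exact one_add_pow_sub_one_le_mul_exp (Real.sqrt_nonneg _) p
    _ = √n * √(d * p) * exp (√(d * p / n)) := by rw [hsqrt, ← mul_assoc, hn']

theorem stmt_13_general {Ω : Type*} [MeasurableSpace Ω] (P : Measure Ω)
    (n k : ℕ) (hn : 1 ≤ n) (hk : 1 ≤ k)
    (X : Fin n → Ω → ℝ) (hXm : ∀ i, Measurable (X i))
    (hmean : ∀ i, ∫ ω, X i ω ∂P = 0)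
    (hmom : ∀ i, Integrable (fun ω => |X i ω| ^ (2 * k)) P)
    (𝒩 : Fin n → Finset (Fin n))
    (hloc : ∀ i, IndepFun (X i) (fun ω => (∑ j, X j ω) - ∑ j ∈ 𝒩 i, X j ω) P)
    (d : ℕ) (hddef : d = Finset.univ.sup fun i => (𝒩 i).card)
    (x : ℝ) (hxdef : x = ⨆ i, rnorm P (X i) (2 * k)) :
    rnorm P (fun ω => ∑ i, X i ω) (2 * k)
      ≤ n * x * ((1 + Real.sqrt ((d : ℝ) / ((n : ℝ) * (2 * (k : ℝ) - 1)))) ^ (2 * k - 1) - 1)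
    ∧ n * x * ((1 + Real.sqrt ((d : ℝ) / ((n : ℝ) * (2 * (k : ℝ) - 1)))) ^ (2 * k - 1) - 1)
      ≤ Real.sqrt n * x * Real.sqrt ((d : ℝ) * (2 * (k : ℝ) - 1))
          * Real.exp (Real.sqrt ((d : ℝ) * (2 * (k : ℝ) - 1) / n)) := by
  obtain ⟨p, hp⟩ : ∃ p, 2 * k = p + 1 := ⟨2 * k - 1, by omega⟩
  have hpR : 2 * (k : ℝ) - 1 = p := by
    rw [← Nat.cast_ofNat, ← Nat.cast_mul, hp]; push_cast; ring
  rw [hp] at hmom hxdef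
  rw [hpR, hp, Nat.add_sub_cancel]
  have hX : ∀ i, MemLp (X i) (p + 1 : ℕ) P := fun i =>
    memLp_of_integrable_abs_pow (by omega) (hXm i).aestronglyMeasurable (hmom i)
  have hx : ∀ i, rnorm P (X i) (p + 1) ≤ x := fun i =>
    hxdef ▸ le_ciSup (f := fun i => rnorm P (X i) (p + 1)) (Set.finite_range _).bddAbove i
  have hx0 : 0 ≤ x := (rnorm_nonneg P _ _).trans (hx ⟨0, hn⟩)
  have hy : ∀ i, rnorm P (fun ω => ∑ j ∈ 𝒩 i, X j ω) (p + 1) ≤ d * x := fun i => calc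
    _ ≤ ∑ j ∈ 𝒩 i, rnorm P (X j) (p + 1) := rnorm_sum_le _ (by omega) fun j _ => hX j
    _ ≤ (𝒩 i).card * x := by simpa using Finset.sum_le_sum fun j (_ : j ∈ 𝒩 i) => hx j
    _ ≤ d * x := by
        gcongr; exact hddef ▸ Finset.le_sup (f := fun i => (𝒩 i).card) (Finset.mem_univ i)
  have hn0 : (0 : ℝ) < n := by exact_mod_cast hn
  have hp0 : (0 : ℝ) < p := by exact_mod_cast (by omega : 0 < p)
  refine ⟨le_mul_one_add_pow_sub_one (y := d * x) (by positivity) (Real.sqrt_nonneg _)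
    (by positivity) ?_ (by simpa using rnorm_sum_pow_succ_le ⟨k, by omega⟩ hX hmean hloc hx hy), ?_⟩
  · rw [Real.sq_sqrt (by positivity)]
    exact (by field_simp : (d * x : ℝ) = n * x * p * (d / (n * p))).le
  · nlinarith [mul_le_mul_of_nonneg_left
      (mul_one_add_sqrt_pow_sub_one_le hn0 d p) hx0]

/-- Central moment bounds for sums of locally dependent mean-zero random variables. -/
theorem stmt_13 {Ω : Type*} [MeasurableSpace Ω] (P : Measure Ω) [IsProbabilityMeasure P]
    (n k : ℕ) (hn : 1 ≤ n) (hk : 1 ≤ k)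
    (X : Fin n → Ω → ℝ) (hXm : ∀ i, Measurable (X i))
    (hmean : ∀ i, ∫ ω, X i ω ∂P = 0)
    (hmom : ∀ i, Integrable (fun ω => |X i ω| ^ (2 * k)) P)
    (𝒩 : Fin n → Finset (Fin n)) (hself : ∀ i, i ∈ 𝒩 i)
    (hloc : ∀ i, IndepFun (X i) (fun ω => (∑ j, X j ω) - ∑ j ∈ 𝒩 i, X j ω) P)
    (d : ℕ) (hddef : d = Finset.univ.sup fun i => (𝒩 i).card)
    (x : ℝ) (hxdef : x = ⨆ i, rnorm P (X i) (2 * k)) :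
    rnorm P (fun ω => ∑ i, X i ω) (2 * k)
      ≤ n * x * ((1 + Real.sqrt ((d : ℝ) / ((n : ℝ) * (2 * (k : ℝ) - 1)))) ^ (2 * k - 1) - 1)
    ∧ n * x * ((1 + Real.sqrt ((d : ℝ) / ((n : ℝ) * (2 * (k : ℝ) - 1)))) ^ (2 * k - 1) - 1)
      ≤ Real.sqrt n * x * Real.sqrt ((d : ℝ) * (2 * (k : ℝ) - 1))
          * Real.exp (Real.sqrt ((d : ℝ) * (2 * (k : ℝ) - 1) / n)) :=
  stmt_13_general P n k hn hk X hXm hmean hmom 𝒩 hloc d hddef x hxdef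
end

section
/- Let X₁, …, X_n be real random variables with mean zero such that |X_i| ≤ x almost surely for all i and some x > 0, and suppose that for each i there is a set 𝒩_i ⊆ {1,…,n} with i ∈ 𝒩_i such that X_i is independent of W − Σ_{j∈𝒩_i} X_j, where W := Σ_{i=1}^n X_i. Let d := max_i |𝒩_i|. Then for all t ≥ √(2 e n d x²), P(|W| > t) ≤ e·exp{−(t²/(2 e n d x²))·(1 − (t/(n x))·√(6/e))}. -/
open MeasureTheory ProbabilityTheory Real

/-!
Herbst's argument. Write `W = ∑ i, X i` and `Yᵢ = ∑ j ∈ 𝒩 i, X j`. Since `X i` is centred and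
independent of `W - Yᵢ`, `E[X i e^{sW}] = E[X i e^{s(W - Yᵢ)} (e^{sYᵢ} - 1)]`, and `|Yᵢ| ≤ d x`
bounds this by `e d x² s E[e^{sW}]` as long as `2 s d x ≤ 1`. Summing over `i`, the mgf `M` of `W`
satisfies `M'(s) ≤ e n d x² s M(s)`, hence `M(l) ≤ exp (e n d x² l² / 2)`. Chernoff's bound at
`l = t / (e n d x²)` (admissible since `|W| ≤ n x` leaves nothing to prove for `t > n x`) bounds
each one-sided tail by `exp (-t² / (2 e n d x²))`, and `2 ≤ e` absorbs the two tails; the factor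
`1 - (t / (n x)) √(6 / e)` only weakens the bound.
-/

namespace Real

theorem abs_exp_sub_one_le_mul_exp_abs (a : ℝ) : |exp a - 1| ≤ |a| * exp |a| := by
  rcases le_or_gt 0 a with ha | ha
  · have h : exp a * exp (-a) = 1 := by rw [← exp_add, add_neg_cancel, exp_zero]
    rw [abs_of_nonneg ha, abs_of_nonneg (sub_nonneg.2 (one_le_exp ha))]
    nlinarith [add_one_le_exp (-a), exp_pos a]
  · rw [abs_of_neg ha, abs_of_nonpos (sub_nonpos.2 (exp_le_one_iff.2 ha.le))]
    nlinarith [add_one_le_exp a, one_le_exp (neg_nonneg.2 ha.le)]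

theorem mul_exp_mul_sub_one_le {z y a b s : ℝ} (hz : |z| ≤ a) (hy : |y| ≤ b) (hs : 0 ≤ s)
    (hsb : 2 * s * b ≤ 1) : z * (exp (s * y) - 1) ≤ exp 1 * a * b * s * exp (s * y) := by
  have hsy : |s * y| ≤ s * b := by rw [abs_mul, abs_of_nonneg hs]; gcongr
  have hsb0 : 0 ≤ s * b := (abs_nonneg _).trans hsy
  -- `exp (s * b) ^ 2 ≤ e` and `exp (-(s * b)) ≤ exp (s * y)` trade `exp (s * b)` for `exp (s * y)`
  have hexp : s * b * exp (s * b) ≤ exp 1 * s * b * exp (s * y) := by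
    have h1 : exp (s * b) = exp (2 * s * b) * exp (-(s * b)) := by rw [← exp_add]; ring_nf
    have h2 : exp (-(s * b)) ≤ exp (s * y) := exp_le_exp.2 (by linarith [neg_abs_le (s * y)])
    rw [h1]
    calc s * b * (exp (2 * s * b) * exp (-(s * b)))
        ≤ s * b * (exp 1 * exp (s * y)) := by gcongr
      _ = exp 1 * s * b * exp (s * y) := by ring
  calc z * (exp (s * y) - 1) ≤ |z| * |exp (s * y) - 1| := (le_abs_self _).trans (abs_mul _ _).le
    _ ≤ a * (s * b * exp (s * b)) := by
        gcongr
        · exact (abs_nonneg z).trans hz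
        · exact (abs_exp_sub_one_le_mul_exp_abs _).trans (by gcongr)
    _ ≤ a * (exp 1 * s * b * exp (s * y)) := by gcongr; exact (abs_nonneg z).trans hz
    _ = exp 1 * a * b * s * exp (s * y) := by ring

theorem le_mul_exp_of_hasDerivAt_le_mul {f f' : ℝ → ℝ} {C l : ℝ} (hl : 0 ≤ l)
    (hf : ∀ s, HasDerivAt f (f' s) s) (hf' : ∀ s ∈ Set.Ioo 0 l, f' s ≤ C * s * f s) :
    f l ≤ f 0 * exp (C * l ^ 2 / 2) := by
  set g : ℝ → ℝ := fun s => f s * exp (-(C * s ^ 2 / 2))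
  have hg : ∀ s, HasDerivAt g ((f' s - C * s * f s) * exp (-(C * s ^ 2 / 2))) s := by
    intro s
    have hq : HasDerivAt (fun s => -(C * s ^ 2 / 2)) (-(C * s)) s :=
      (((hasDerivAt_pow 2 s).const_mul C).div_const 2).neg.congr_deriv (by norm_num; ring)
    exact ((hf s).mul hq.exp).congr_deriv (by ring)
  have hanti : AntitoneOn g (Set.Icc 0 l) := by
    refine antitoneOn_of_hasDerivWithinAt_nonpos (convex_Icc 0 l)
      (fun s _ => (hg s).continuousAt.continuousWithinAt) (fun s _ => (hg s).hasDerivWithinAt) ?_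
    intro s hs
    rw [interior_Icc] at hs
    exact mul_nonpos_of_nonpos_of_nonneg (sub_nonpos.2 (hf' s hs)) (exp_pos _).le
  calc f l = g l * exp (C * l ^ 2 / 2) := by
        simp only [g, mul_assoc, ← exp_add, neg_add_cancel, exp_zero, mul_one]
    _ ≤ g 0 * exp (C * l ^ 2 / 2) := by gcongr; exact hanti ⟨le_rfl, hl⟩ ⟨hl, le_rfl⟩ hl
    _ = f 0 * exp (C * l ^ 2 / 2) := by simp [g]

end Real

namespace ProbabilityTheory

variable {Ω ι : Type*} [MeasurableSpace Ω] {P : Measure Ω}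

theorem integrable_exp_mul_of_ae_abs_le [IsFiniteMeasure P] {Z : Ω → ℝ} (hZ : Measurable Z)
    {b : ℝ} (hb : ∀ᵐ ω ∂P, |Z ω| ≤ b) (s : ℝ) : Integrable (fun ω => exp (s * Z ω)) P :=
  integrable_exp_mul_of_mem_Icc hZ.aemeasurable (by filter_upwards [hb] with ω hω using abs_le.1 hω)

theorem measureReal_ge_le_exp_of_mgf_le [IsFiniteMeasure P] {W : Ω → ℝ} {C t : ℝ} (ht : 0 ≤ t)
    (hC : 0 ≤ C) (hint : Integrable (fun ω => exp (t / C * W ω)) P)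
    (hmgf : mgf W P (t / C) ≤ exp (C * (t / C) ^ 2 / 2)) :
    P.real {ω | t ≤ W ω} ≤ exp (-(t ^ 2 / (2 * C))) := by
  calc P.real {ω | t ≤ W ω} ≤ exp (-(t / C) * t) * mgf W P (t / C) :=
        measure_ge_le_exp_mul_mgf t (div_nonneg ht hC) hint
    _ ≤ exp (-(t / C) * t) * exp (C * (t / C) ^ 2 / 2) := by gcongr
    _ = exp (-(t ^ 2 / (2 * C))) := by
        rw [← exp_add]
        congr 1
        rcases eq_or_ne C 0 with rfl | hC0
        · simp
        · field_simp
          ring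

theorem integral_mul_exp_add_le_of_indepFun {Z V Y : Ω → ℝ} (hZ : Measurable Z)
    (hV : Measurable V) (hY : Measurable Y) (hZV : IndepFun Z V P) (hmean : P[Z] = 0)
    {a b s : ℝ} (hZa : ∀ᵐ ω ∂P, |Z ω| ≤ a) (hYb : ∀ᵐ ω ∂P, |Y ω| ≤ b) (hs : 0 ≤ s)
    (hsb : 2 * s * b ≤ 1) (hVint : Integrable (fun ω => exp (s * V ω)) P) :
    ∫ ω, Z ω * exp (s * (V ω + Y ω)) ∂P
      ≤ exp 1 * a * b * s * ∫ ω, exp (s * (V ω + Y ω)) ∂P := by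
  have hexpY : ∀ᵐ ω ∂P, ‖exp (s * Y ω)‖ ≤ exp (s * b) := by
    filter_upwards [hYb] with ω hω
    rw [norm_of_nonneg (exp_pos _).le, exp_le_exp]
    exact mul_le_mul_of_nonneg_left ((le_abs_self _).trans hω) hs
  have hmY : AEStronglyMeasurable (fun ω => exp (s * Y ω)) P :=
    (measurable_exp.comp (hY.const_mul s)).aestronglyMeasurable
  have hZV_int : Integrable (fun ω => Z ω * exp (s * V ω)) P :=
    hVint.bdd_mul hZ.aestronglyMeasurable (by simpa only [norm_eq_abs] using hZa)
  have hZW_int : Integrable (fun ω => Z ω * exp (s * V ω) * exp (s * Y ω)) P :=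
    hZV_int.mul_bdd hmY hexpY
  have hW_int : Integrable (fun ω => exp (s * V ω) * exp (s * Y ω)) P :=
    hVint.mul_bdd hmY hexpY
  have hZV_zero : ∫ ω, Z ω * exp (s * V ω) ∂P = 0 := by
    have hind : IndepFun Z (fun ω => exp (s * V ω)) P :=
      hZV.comp measurable_id (measurable_exp.comp (measurable_const_mul s))
    rw [hind.integral_fun_mul_eq_mul_integral hZ.aestronglyMeasurable
      (measurable_exp.comp (hV.const_mul s)).aestronglyMeasurable, hmean, zero_mul]
  simp only [mul_add, exp_add, ← mul_assoc]
  calc ∫ ω, Z ω * exp (s * V ω) * exp (s * Y ω) ∂P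
      = ∫ ω, exp (s * V ω) * (Z ω * (exp (s * Y ω) - 1)) ∂P := by
        rw [← sub_zero (∫ ω, Z ω * exp (s * V ω) * exp (s * Y ω) ∂P), ← hZV_zero,
          ← integral_sub hZW_int hZV_int]
        congr 1 with ω
        ring
    _ ≤ ∫ ω, exp (s * V ω) * (exp 1 * a * b * s * exp (s * Y ω)) ∂P := by
        refine integral_mono_ae
          ((hZW_int.sub hZV_int).congr (ae_of_all _ fun ω => by simp only [Pi.sub_apply]; ring))
          ((hW_int.const_mul (exp 1 * a * b * s)).congr (ae_of_all _ fun ω => by ring)) ?_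
        filter_upwards [hZa, hYb] with ω hz hy
        exact mul_le_mul_of_nonneg_left (mul_exp_mul_sub_one_le hz hy hs hsb) (exp_pos _).le
    _ = exp 1 * a * b * s * ∫ ω, exp (s * V ω) * exp (s * Y ω) ∂P := by
        rw [← integral_const_mul]
        congr 1 with ω
        ring

variable [Fintype ι]

def IsLocallyDependent (X : ι → Ω → ℝ) (𝒩 : ι → Finset ι) (P : Measure Ω) : Prop :=
  ∀ i, IndepFun (X i) (fun ω => (∑ j, X j ω) - ∑ j ∈ 𝒩 i, X j ω) P

variable {X : ι → Ω → ℝ} {𝒩 : ι → Finset ι} {x : ℝ} {d : ℕ}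

theorem IsLocallyDependent.neg (h : IsLocallyDependent X 𝒩 P) :
    IsLocallyDependent (fun i ω => -X i ω) 𝒩 P := by
  intro i
  refine ((h i).comp measurable_neg measurable_neg).congr (ae_of_all _ fun ω => rfl)
    (ae_of_all _ fun ω => ?_)
  simp only [Function.comp_apply, Finset.sum_neg_distrib]
  ring

theorem ae_abs_sum_le (hbdd : ∀ i, ∀ᵐ ω ∂P, |X i ω| ≤ x) (S : Finset ι) :
    ∀ᵐ ω ∂P, |∑ i ∈ S, X i ω| ≤ S.card * x := by
  filter_upwards [ae_all_iff.2 hbdd] with ω hω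
  calc |∑ i ∈ S, X i ω| ≤ ∑ i ∈ S, |X i ω| := Finset.abs_sum_le_sum_abs _ _
    _ ≤ ∑ _i ∈ S, x := Finset.sum_le_sum fun i _ => hω i
    _ = S.card * x := by rw [Finset.sum_const, nsmul_eq_mul]

theorem IsLocallyDependent.integral_sum_mul_exp_le [IsFiniteMeasure P]
    (hXm : ∀ i, Measurable (X i)) (hmean : ∀ i, P[X i] = 0) (hbdd : ∀ i, ∀ᵐ ω ∂P, |X i ω| ≤ x)
    (hloc : IsLocallyDependent X 𝒩 P) (hd : ∀ i, (𝒩 i).card ≤ d) (hx : 0 ≤ x) {s : ℝ} (hs : 0 ≤ s)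
    (hsd : 2 * s * (d * x) ≤ 1) :
    ∫ ω, (∑ i, X i ω) * exp (s * ∑ i, X i ω) ∂P
      ≤ exp 1 * Fintype.card ι * d * x ^ 2 * s * mgf (fun ω => ∑ i, X i ω) P s := by
  have hsum_meas : ∀ S : Finset ι, Measurable fun ω => ∑ i ∈ S, X i ω :=
    fun S => Finset.measurable_sum S fun i _ => hXm i
  have hterm : ∀ i, ∫ ω, X i ω * exp (s * ∑ j, X j ω) ∂P
      ≤ exp 1 * d * x ^ 2 * s * mgf (fun ω => ∑ i, X i ω) P s := by
    intro i
    have hYb : ∀ᵐ ω ∂P, |∑ j ∈ 𝒩 i, X j ω| ≤ d * x := by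
      filter_upwards [ae_abs_sum_le hbdd (𝒩 i)] with ω hω
      exact hω.trans (mul_le_mul_of_nonneg_right (Nat.cast_le.2 (hd i)) hx)
    have hVb : ∀ᵐ ω ∂P, |(∑ j, X j ω) - ∑ j ∈ 𝒩 i, X j ω| ≤ Fintype.card ι * x + d * x := by
      filter_upwards [ae_abs_sum_le hbdd Finset.univ, hYb] with ω hW hY
      exact (abs_sub _ _).trans (add_le_add hW hY)
    have h := integral_mul_exp_add_le_of_indepFun (hXm i) ((hsum_meas _).sub (hsum_meas _))
      (hsum_meas _) (hloc i) (hmean i) (hbdd i) hYb hs hsd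
      (integrable_exp_mul_of_ae_abs_le ((hsum_meas _).sub (hsum_meas _)) hVb s)
    simp only [Pi.sub_apply, sub_add_cancel] at h
    calc _ ≤ _ := h
      _ = _ := by rw [mgf]; ring
  have hWint := integrable_exp_mul_of_ae_abs_le (hsum_meas _) (ae_abs_sum_le hbdd Finset.univ) s
  simp_rw [Finset.sum_mul]
  rw [integral_finsetSum _ fun i _ =>
    hWint.bdd_mul (hXm i).aestronglyMeasurable (by simpa only [norm_eq_abs] using hbdd i)]
  calc _ ≤ ∑ _i : ι, exp 1 * d * x ^ 2 * s * mgf (fun ω => ∑ i, X i ω) P s :=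
        Finset.sum_le_sum fun i _ => hterm i
    _ = _ := by rw [Finset.sum_const, Finset.card_univ, nsmul_eq_mul]; ring

theorem IsLocallyDependent.mgf_sum_le [IsProbabilityMeasure P] (hXm : ∀ i, Measurable (X i))
    (hmean : ∀ i, P[X i] = 0) (hbdd : ∀ i, ∀ᵐ ω ∂P, |X i ω| ≤ x)
    (hloc : IsLocallyDependent X 𝒩 P) (hd : ∀ i, (𝒩 i).card ≤ d) (hx : 0 ≤ x) {l : ℝ}
    (hl : 0 ≤ l) (hld : 2 * l * (d * x) ≤ 1) :
    mgf (fun ω => ∑ i, X i ω) P l ≤ exp (exp 1 * Fintype.card ι * d * x ^ 2 * l ^ 2 / 2) := by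
  have hWm : Measurable fun ω => ∑ i, X i ω := Finset.measurable_sum _ fun i _ => hXm i
  have hexpSet : integrableExpSet (fun ω => ∑ i, X i ω) P = Set.univ :=
    Set.eq_univ_of_forall (integrable_exp_mul_of_ae_abs_le hWm (ae_abs_sum_le hbdd _))
  have h := Real.le_mul_exp_of_hasDerivAt_le_mul hl
    (fun s => hasDerivAt_mgf (by simp [hexpSet])) fun s hs =>
      hloc.integral_sum_mul_exp_le hXm hmean hbdd hd hx hs.1.le
        (le_trans (by gcongr; exact hs.2.le) hld)
  rwa [mgf_zero, one_mul] at h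

theorem IsLocallyDependent.measureReal_sum_ge_le [IsProbabilityMeasure P]
    (hXm : ∀ i, Measurable (X i)) (hmean : ∀ i, P[X i] = 0) (hbdd : ∀ i, ∀ᵐ ω ∂P, |X i ω| ≤ x)
    (hloc : IsLocallyDependent X 𝒩 P) (hd : ∀ i, (𝒩 i).card ≤ d) (hx : 0 ≤ x) {t : ℝ}
    (ht : 0 ≤ t) :
    P.real {ω | t ≤ ∑ i, X i ω}
      ≤ exp (-(t ^ 2 / (2 * exp 1 * Fintype.card ι * d * x ^ 2))) := by
  set n : ℝ := (Fintype.card ι : ℝ)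
  have hWm : Measurable fun ω => ∑ i, X i ω := Finset.measurable_sum _ fun i _ => hXm i
  have hWb : ∀ᵐ ω ∂P, |∑ i, X i ω| ≤ n * x := ae_abs_sum_le hbdd Finset.univ
  rcases lt_or_ge (n * x) t with htn | htn
  · have hnull : P {ω | t ≤ ∑ i, X i ω} = 0 := by
      rw [← compl_mem_ae_iff]
      filter_upwards [hWb] with ω hω
      exact not_le.2 ((le_abs_self _).trans_lt (hω.trans_lt htn))
    rw [measureReal_def, hnull, ENNReal.toReal_zero]
    exact (exp_pos _).le
  set C := exp 1 * n * d * x ^ 2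
  have hC : 0 ≤ C := by positivity
  have h2e : 2 * t * (d * x) ≤ C :=
    calc 2 * t * (d * x) ≤ exp 1 * (n * x) * (d * x) := by
          gcongr
          nlinarith [exp_one_gt_two]
      _ = C := by ring
  have h := measureReal_ge_le_exp_of_mgf_le ht hC (integrable_exp_mul_of_ae_abs_le hWm hWb _)
    (hloc.mgf_sum_le hXm hmean hbdd hd hx (div_nonneg ht hC) ?_)
  · convert h using 4
    ring
  · calc 2 * (t / C) * (d * x) = 2 * t * (d * x) / C := by ring
      _ ≤ 1 := div_le_one_of_le₀ h2e hC

end ProbabilityTheory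

theorem stmt_14_general {Ω : Type*} [MeasurableSpace Ω] (P : Measure Ω) [IsProbabilityMeasure P]
    (n : ℕ)
    (X : Fin n → Ω → ℝ) (hXm : ∀ i, Measurable (X i))
    (hmean : ∀ i, ∫ ω, X i ω ∂P = 0)
    (x : ℝ) (hx : 0 < x) (hbdd : ∀ i, ∀ᵐ ω ∂P, |X i ω| ≤ x)
    (𝒩 : Fin n → Finset (Fin n))
    (hloc : ∀ i, IndepFun (X i) (fun ω => (∑ j, X j ω) - ∑ j ∈ 𝒩 i, X j ω) P)
    (d : ℕ) (hddef : d = Finset.univ.sup fun i => (𝒩 i).card)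
    (t : ℝ) (ht : Real.sqrt (2 * Real.exp 1 * n * d * x ^ 2) ≤ t) :
    P {ω | t < |∑ i, X i ω|}
      ≤ ENNReal.ofReal (Real.exp 1 *
          Real.exp (-(t ^ 2 / (2 * Real.exp 1 * n * d * x ^ 2))
            * (1 - t / ((n : ℝ) * x) * Real.sqrt (6 / Real.exp 1)))) := by
  have hd : ∀ i, (𝒩 i).card ≤ d := fun i =>
    hddef ▸ Finset.le_sup (f := fun i => (𝒩 i).card) (Finset.mem_univ i)
  have ht0 : 0 ≤ t := (sqrt_nonneg _).trans ht
  have hloc : IsLocallyDependent X 𝒩 P := hloc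
  have hupper := hloc.measureReal_sum_ge_le hXm hmean hbdd hd hx.le ht0
  have hlower := IsLocallyDependent.measureReal_sum_ge_le (X := fun i ω => -X i ω)
    (fun i => (hXm i).neg) (fun i => by simp only [integral_neg, hmean i, neg_zero])
    (by simpa only [abs_neg] using hbdd) hloc.neg hd hx.le ht0
  simp only [Fintype.card_fin, Finset.sum_neg_distrib] at hupper hlower
  set A := t ^ 2 / (2 * exp 1 * n * d * x ^ 2)
  have hA : 0 ≤ A := by positivity
  have hB : 0 ≤ t / (n * x) * sqrt (6 / exp 1) := by positivity
  rw [ENNReal.le_ofReal_iff_toReal_le (measure_ne_top _ _) (by positivity), ← measureReal_def]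
  have hsub : {ω | t < |∑ i, X i ω|} ⊆ {ω | t ≤ ∑ i, X i ω} ∪ {ω | t ≤ -∑ i, X i ω} :=
    fun ω (hω : t < |∑ i, X i ω|) => (lt_abs.1 hω).imp le_of_lt le_of_lt
  calc P.real {ω | t < |∑ i, X i ω|}
      ≤ P.real {ω | t ≤ ∑ i, X i ω} + P.real {ω | t ≤ -∑ i, X i ω} :=
        (measureReal_mono hsub).trans (measureReal_union_le _ _)
    _ ≤ 2 * exp (-A) := by linarith
    _ ≤ exp 1 * exp (-A * (1 - t / (n * x) * sqrt (6 / exp 1))) := by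
        gcongr
        · exact exp_one_gt_two.le
        · nlinarith

/-- Concentration for sums of bounded, locally dependent, mean-zero random variables. -/
theorem stmt_14 {Ω : Type*} [MeasurableSpace Ω] (P : Measure Ω) [IsProbabilityMeasure P]
    (n : ℕ) (hn : 1 ≤ n)
    (X : Fin n → Ω → ℝ) (hXm : ∀ i, Measurable (X i))
    (hmean : ∀ i, ∫ ω, X i ω ∂P = 0)
    (x : ℝ) (hx : 0 < x) (hbdd : ∀ i, ∀ᵐ ω ∂P, |X i ω| ≤ x)
    (𝒩 : Fin n → Finset (Fin n)) (hself : ∀ i, i ∈ 𝒩 i)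
    (hloc : ∀ i, IndepFun (X i) (fun ω => (∑ j, X j ω) - ∑ j ∈ 𝒩 i, X j ω) P)
    (d : ℕ) (hddef : d = Finset.univ.sup fun i => (𝒩 i).card)
    (t : ℝ) (ht : Real.sqrt (2 * Real.exp 1 * n * d * x ^ 2) ≤ t) :
    P {ω | t < |∑ i, X i ω|}
      ≤ ENNReal.ofReal (Real.exp 1 *
          Real.exp (-(t ^ 2 / (2 * Real.exp 1 * n * d * x ^ 2))
            * (1 - t / ((n : ℝ) * x) * Real.sqrt (6 / Real.exp 1)))) :=
  stmt_14_general P n X hXm hmean x hx hbdd 𝒩 hloc d hddef t ht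
end

section
/- Let W ≥ 0 be a random variable with μ := E[W] ∈ (0,∞), and let W^s be a random variable on the same probability space having the size-bias distribution of W, i.e. E[f(W^s)] = E[W f(W)]/μ for all measurable f : ℝ → ℝ for which the right-hand side is well defined. Suppose |W^s − W| ≤ c almost surely for a constant c > 0. Then for all t ≥ √(2 e μ c), P(|W − μ| > t) ≤ e·exp{−(t²/(2 e μ c))·(1 − (t/μ)·√(6/e))}. -/
open MeasureTheory ProbabilityTheory Real

/-- `Ws` has the size-bias distribution of `W` (on a common probability space):
`E[f(Ws)] = E[W·f(W)]/μ` for all measurable `f` for which the right-hand side is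
well defined, where `μ = E[W]`. -/
def IsSizeBiasCoupling {Ω : Type*} [MeasurableSpace Ω] (P : Measure Ω)
    (W Ws : Ω → ℝ) : Prop :=
  ∀ f : ℝ → ℝ, Measurable f →
    Integrable (fun ω => W ω * f (W ω)) P →
    ∫ ω, f (Ws ω) ∂P = (∫ ω, W ω * f (W ω) ∂P) / ∫ x, W x ∂P

/-!
The moment generating function `G(θ) = E[exp (θ W)]` satisfies
`G'(θ) = E[W exp (θ W)] = μ E[exp (θ Wˢ)]`, and `Wˢ ≤ W + c` turns this into the differential
inequality `G' ≤ μ e^{θc} G` for `θ ≥ 0` (after truncating `W` at a level `M`, so that `G` is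
finite) and `G' ≥ μ e^{θc} G` for `θ ≤ 0`. Integrating from `0` gives
`G(θ) ≤ exp (μ (e^{θc} - 1) / c)` on both sides of `0`. Chernoff's bound at `θ = ± t / (2μc)`
together with `e^x ≤ 1 + x + x²` for `|x| ≤ 1` then yields
`P(|W - μ| ≥ t) ≤ 2 exp (-t² / (4μc))` for `t ≤ 2μ`, which implies the claim since `2e ≥ 4`;
when `(t/μ) √(6/e) ≥ 1` the claimed bound is at least `1`.
-/

open Set

theorem mul_exp_sub_le_of_mul_le_deriv {G G' B b : ℝ → ℝ} {x y : ℝ} (hxy : x ≤ y)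
    (hG : ContinuousOn G (Icc x y)) (hG' : ∀ u ∈ Ioo x y, HasDerivAt G (G' u) u)
    (hB : ∀ u, HasDerivAt B (b u) u) (h : ∀ u ∈ Ioo x y, b u * G u ≤ G' u) :
    G x * exp (B y - B x) ≤ G y := by
  have hΦ' (u) (hu : u ∈ Ioo x y) : HasDerivAt (fun v => G v * exp (-B v))
      ((G' u - b u * G u) * exp (-B u)) u := by
    have hE : HasDerivAt (fun v => exp (-B v)) (exp (-B u) * -b u) u := (hB u).neg.exp
    exact ((hG' u hu).mul hE).congr_deriv (by ring)
  have hmono : MonotoneOn (fun v => G v * exp (-B v)) (Icc x y) := by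
    have hBc : Continuous B := continuous_iff_continuousAt.2 fun u => (hB u).continuousAt
    refine monotoneOn_of_deriv_nonneg (convex_Icc x y)
      (hG.mul (hBc.neg.rexp.continuousOn)) ?_ ?_ <;> rw [interior_Icc]
    · exact fun u hu => (hΦ' u hu).differentiableAt.differentiableWithinAt
    · intro u hu
      rw [(hΦ' u hu).deriv]
      exact mul_nonneg (sub_nonneg.2 (h u hu)) (exp_pos _).le
  calc G x * exp (B y - B x) = G x * exp (-B x) * exp (B y) := by
        rw [mul_assoc, ← Real.exp_add, neg_add_eq_sub]
    _ ≤ G y * exp (-B y) * exp (B y) :=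
        mul_le_mul_of_nonneg_right (hmono (left_mem_Icc.2 hxy) (right_mem_Icc.2 hxy) hxy)
          (exp_pos _).le
    _ = G y := by rw [mul_assoc, ← Real.exp_add, neg_add_cancel, Real.exp_zero, mul_one]

theorem le_mul_exp_sub_of_deriv_le_mul {G G' B b : ℝ → ℝ} {x y : ℝ} (hxy : x ≤ y)
    (hG : ContinuousOn G (Icc x y)) (hG' : ∀ u ∈ Ioo x y, HasDerivAt G (G' u) u)
    (hB : ∀ u, HasDerivAt B (b u) u) (h : ∀ u ∈ Ioo x y, G' u ≤ b u * G u) :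
    G y ≤ G x * exp (B y - B x) := by
  have := mul_exp_sub_le_of_mul_le_deriv (G := -G) (G' := -G') hxy hG.neg
    (fun u hu => (hG' u hu).neg) hB (fun u hu => by simpa using h u hu)
  simpa using this

theorem hasDerivAt_mul_exp_mul_sub_one_div (m : ℝ) {c : ℝ} (hc : c ≠ 0) (u : ℝ) :
    HasDerivAt (fun u => m * (exp (u * c) - 1) / c) (m * exp (u * c)) u :=
  ((((hasDerivAt_mul_const (x := u) c).exp.sub_const 1).const_mul m).div_const c).congr_deriv
    (by field_simp)

theorem mul_exp_mul_sub_one_div_le {m c x : ℝ} (hm : 0 ≤ m) (hc : 0 < c) (hx : |x * c| ≤ 1) :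
    m * (exp (x * c) - 1) / c ≤ m * x + m * c * x ^ 2 := by
  have h := (abs_le.1 (abs_exp_sub_one_sub_id_le hx)).2
  rw [div_le_iff₀ hc]
  nlinarith [mul_le_mul_of_nonneg_left h hm]

namespace ProbabilityTheory

variable {Ω : Type*} [MeasurableSpace Ω] {μ : Measure Ω} {X : Ω → ℝ}

theorem integrable_exp_mul_of_ge_of_nonpos [IsFiniteMeasure μ] {t : ℝ} (b : ℝ) (ht : t ≤ 0)
    (hX : AEMeasurable X μ) (hb : ∀ᵐ ω ∂μ, b ≤ X ω) :
    Integrable (fun ω ↦ exp (t * X ω)) μ := by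
  refine .of_mem_Icc 0 (exp (t * b)) (measurable_exp.comp_aemeasurable (hX.const_mul t)) ?_
  filter_upwards [hb] with ω hb
  exact ⟨(exp_pos _).le, exp_le_exp.2 (mul_le_mul_of_nonpos_left hb ht)⟩

theorem continuousOn_mgf_Iic_of_nonneg [IsFiniteMeasure μ] (hX : AEMeasurable X μ)
    (h0 : ∀ᵐ ω ∂μ, 0 ≤ X ω) : ContinuousOn (mgf X μ) (Iic 0) := by
  refine continuousOn_of_dominated (bound := fun _ => 1)
    (fun t _ => (measurable_exp.comp_aemeasurable (hX.const_mul t)).aestronglyMeasurable)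
    (fun t ht => ?_) (integrable_const 1) (ae_of_all _ fun ω => by fun_prop)
  filter_upwards [h0] with ω hω
  rw [norm_of_nonneg (exp_pos _).le, exp_le_one_iff]
  exact mul_nonpos_of_nonpos_of_nonneg ht hω

end ProbabilityTheory

namespace IsSizeBiasCoupling

variable {Ω : Type*} [MeasurableSpace Ω] {P : Measure Ω} {W Ws : Ω → ℝ} {c : ℝ}

theorem integral_mul_comp (hSB : IsSizeBiasCoupling P W Ws) (hμ : ∫ x, W x ∂P ≠ 0)
    {f : ℝ → ℝ} (hf : Measurable f) (hint : Integrable (fun ω => W ω * f (W ω)) P) :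
    ∫ ω, W ω * f (W ω) ∂P = (∫ x, W x ∂P) * ∫ ω, f (Ws ω) ∂P := by
  rw [hSB f hf hint, mul_div_cancel₀ _ hμ]

variable [IsProbabilityMeasure P]

theorem mgf_min_le (hSB : IsSizeBiasCoupling P W Ws) (hWm : Measurable W)
    (hWpos : ∀ᵐ ω ∂P, 0 ≤ W ω) (hWint : Integrable W P) (hμ : 0 < ∫ x, W x ∂P)
    (hc : 0 < c) (hub : ∀ᵐ ω ∂P, Ws ω ≤ W ω + c) (M : ℝ) {θ : ℝ} (hθ : 0 ≤ θ) :
    mgf (fun ω => min (W ω) M) P θ ≤ exp ((∫ x, W x ∂P) * (exp (θ * c) - 1) / c) := by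
  set μ := ∫ x, W x ∂P
  set X := fun ω => min (W ω) M
  have hXm : AEMeasurable X P := (hWm.min measurable_const).aemeasurable
  have hX_mem : ∀ᵐ ω ∂P, X ω ∈ Icc (min 0 M) M := by
    filter_upwards [hWpos] with ω hω
    exact ⟨min_le_min_right M hω, min_le_right _ _⟩
  have hint (u : ℝ) : Integrable (fun ω => exp (u * X ω)) P :=
    integrable_exp_mul_of_mem_Icc hXm hX_mem
  have hinterior (u : ℝ) : u ∈ interior (integrableExpSet X P) := by
    rw [show integrableExpSet X P = univ from eq_univ_of_forall hint, interior_univ]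
    trivial
  have hderiv (u : ℝ) : HasDerivAt (mgf X P) (∫ ω, X ω * exp (u * X ω) ∂P) u :=
    hasDerivAt_mgf (hinterior u)
  have hkey (u : ℝ) (hu : 0 ≤ u) :
      ∫ ω, X ω * exp (u * X ω) ∂P ≤ μ * exp (u * c) * mgf X P u := by
    have hWint' : Integrable (fun ω => W ω * exp (u * X ω)) P := by
      refine hWint.mul_bdd (hint u).aestronglyMeasurable (c := exp (u * M)) ?_
      filter_upwards with ω
      rw [norm_of_nonneg (exp_pos _).le]
      exact exp_le_exp.2 (mul_le_mul_of_nonneg_left (min_le_right _ _) hu)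
    have hshift : ∀ᵐ ω ∂P, min (Ws ω) M ≤ X ω + c := by
      filter_upwards [hub] with ω hω
      calc min (Ws ω) M ≤ min (W ω + c) (M + c) := min_le_min hω (by linarith)
        _ = X ω + c := min_add_add_right _ _ _
    calc ∫ ω, X ω * exp (u * X ω) ∂P ≤ ∫ ω, W ω * exp (u * X ω) ∂P := by
          refine integral_mono_ae ?_ hWint' (ae_of_all _ fun ω => ?_)
          · simpa using integrable_pow_mul_exp_of_mem_interior_integrableExpSet (hinterior u) 1
          · exact mul_le_mul_of_nonneg_right (min_le_left _ _) (exp_pos _).le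
      _ = μ * mgf (fun ω => min (Ws ω) M) P u :=
          hSB.integral_mul_comp hμ.ne' (f := fun w => exp (u * min w M)) (by fun_prop) hWint'
      _ ≤ μ * (mgf X P u * exp (u * c)) := by
          rw [← mgf_add_const]
          gcongr
          refine mgf_mono_of_nonneg hshift hu
            (integrable_exp_mul_of_mem_Icc (a := min 0 M + c) (b := M + c) (hXm.add_const c) ?_)
          filter_upwards [hX_mem] with ω h
          exact ⟨add_le_add_left h.1 c, add_le_add_left h.2 c⟩
      _ = μ * exp (u * c) * mgf X P u := by ring
  have := le_mul_exp_sub_of_deriv_le_mul hθ (continuous_mgf hint).continuousOn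
    (fun u _ => hderiv u) (hasDerivAt_mul_exp_mul_sub_one_div μ hc.ne')
    (fun u hu => hkey u hu.1.le)
  simpa using this

theorem mgf_le_of_nonpos (hSB : IsSizeBiasCoupling P W Ws) (hWm : Measurable W)
    (hWsm : Measurable Ws) (hWpos : ∀ᵐ ω ∂P, 0 ≤ W ω) (hμ : 0 < ∫ x, W x ∂P) (hc : 0 < c)
    (hbdd : ∀ᵐ ω ∂P, |Ws ω - W ω| ≤ c) {θ : ℝ} (hθ : θ ≤ 0) :
    mgf W P θ ≤ exp ((∫ x, W x ∂P) * (exp (θ * c) - 1) / c) := by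
  set μ := ∫ x, W x ∂P
  have hint (u : ℝ) (hu : u ≤ 0) : Integrable (fun ω => exp (u * W ω)) P :=
    integrable_exp_mul_of_ge_of_nonpos 0 hu hWm.aemeasurable hWpos
  have hinterior : Iio 0 ⊆ interior (integrableExpSet W P) :=
    interior_maximal (fun u hu => hint u hu.le) isOpen_Iio
  have hkey (u : ℝ) (hu : u < 0) :
      μ * exp (u * c) * mgf W P u ≤ ∫ ω, W ω * exp (u * W ω) ∂P := by
    have hWs_ge : ∀ᵐ ω ∂P, -c ≤ Ws ω := by
      filter_upwards [hbdd, hWpos] with ω h hω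
      linarith [(abs_le.1 h).1]
    have hWs_le : ∀ᵐ ω ∂P, Ws ω ≤ W ω + c := by
      filter_upwards [hbdd] with ω h
      linarith [(abs_le.1 h).2]
    calc μ * exp (u * c) * mgf W P u = μ * mgf (fun ω => W ω + c) P u := by
          rw [mgf_add_const]; ring
      _ ≤ μ * mgf Ws P u := by
          gcongr
          exact mgf_anti_of_nonpos hWs_le hu.le
            (integrable_exp_mul_of_ge_of_nonpos (-c) hu.le hWsm.aemeasurable hWs_ge)
      _ = ∫ ω, W ω * exp (u * W ω) ∂P :=
          (hSB.integral_mul_comp hμ.ne' (f := fun w => exp (u * w)) (by fun_prop)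
            (by simpa using
              integrable_pow_mul_exp_of_mem_interior_integrableExpSet (hinterior hu) 1)).symm
  have := mul_exp_sub_le_of_mul_le_deriv hθ
    ((continuousOn_mgf_Iic_of_nonneg hWm.aemeasurable hWpos).mono Icc_subset_Iic_self)
    (fun u hu => hasDerivAt_mgf (hinterior hu.2)) (hasDerivAt_mul_exp_mul_sub_one_div μ hc.ne')
    (fun u hu => hkey u hu.2)
  rwa [mgf_zero, zero_mul, exp_zero, sub_self, mul_zero, zero_div, zero_sub, exp_neg,
    ← div_eq_mul_inv, div_le_one (exp_pos _)] at this

theorem measureReal_ge_le_exp (hSB : IsSizeBiasCoupling P W Ws) (hWm : Measurable W)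
    (hWpos : ∀ᵐ ω ∂P, 0 ≤ W ω) (hWint : Integrable W P) (hμ : 0 < ∫ x, W x ∂P)
    (hc : 0 < c) (hub : ∀ᵐ ω ∂P, Ws ω ≤ W ω + c) (ε : ℝ) {θ : ℝ} (hθ : 0 ≤ θ) :
    P.real {ω | ε ≤ W ω} ≤ exp (-θ * ε + (∫ x, W x ∂P) * (exp (θ * c) - 1) / c) := by
  have hint : Integrable (fun ω => exp (θ * min (W ω) ε)) P :=
    integrable_exp_mul_of_le θ ε hθ (hWm.min measurable_const).aemeasurable
      (ae_of_all _ fun ω => min_le_right _ _)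
  calc P.real {ω | ε ≤ W ω} = P.real {ω | ε ≤ min (W ω) ε} := by simp
    _ ≤ exp (-θ * ε) * mgf (fun ω => min (W ω) ε) P θ := measure_ge_le_exp_mul_mgf ε hθ hint
    _ ≤ exp (-θ * ε) * exp ((∫ x, W x ∂P) * (exp (θ * c) - 1) / c) := by
        gcongr
        exact hSB.mgf_min_le hWm hWpos hWint hμ hc hub ε hθ
    _ = _ := (exp_add _ _).symm

theorem measureReal_le_le_exp (hSB : IsSizeBiasCoupling P W Ws) (hWm : Measurable W)
    (hWsm : Measurable Ws) (hWpos : ∀ᵐ ω ∂P, 0 ≤ W ω) (hμ : 0 < ∫ x, W x ∂P) (hc : 0 < c)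
    (hbdd : ∀ᵐ ω ∂P, |Ws ω - W ω| ≤ c) (ε : ℝ) {θ : ℝ} (hθ : 0 ≤ θ) :
    P.real {ω | W ω ≤ ε} ≤ exp (θ * ε + (∫ x, W x ∂P) * (exp (-θ * c) - 1) / c) := by
  have hθ' : -θ ≤ 0 := neg_nonpos.2 hθ
  calc P.real {ω | W ω ≤ ε} ≤ exp (- -θ * ε) * mgf W P (-θ) :=
        measure_le_le_exp_mul_mgf ε hθ'
          (integrable_exp_mul_of_ge_of_nonpos 0 hθ' hWm.aemeasurable hWpos)
    _ ≤ exp (θ * ε) * exp ((∫ x, W x ∂P) * (exp (-θ * c) - 1) / c) := by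
        rw [neg_neg]
        gcongr
        exact hSB.mgf_le_of_nonpos hWm hWsm hWpos hμ hc hbdd hθ'
    _ = _ := (exp_add _ _).symm

theorem measureReal_le_abs_sub_integral_le (hSB : IsSizeBiasCoupling P W Ws)
    (hWm : Measurable W) (hWsm : Measurable Ws) (hWpos : ∀ᵐ ω ∂P, 0 ≤ W ω)
    (hWint : Integrable W P) (hμ : 0 < ∫ x, W x ∂P) (hc : 0 < c)
    (hbdd : ∀ᵐ ω ∂P, |Ws ω - W ω| ≤ c) {t : ℝ} (ht : 0 ≤ t) (htμ : t ≤ 2 * ∫ x, W x ∂P) :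
    P.real {ω | t ≤ |W ω - ∫ x, W x ∂P|} ≤ 2 * exp (-(t ^ 2 / (4 * (∫ x, W x ∂P) * c))) := by
  set μ := ∫ x, W x ∂P
  set θ := t / (2 * μ * c) with hθ_def
  have hθ : 0 ≤ θ := by positivity
  have hθc : |θ * c| ≤ 1 := by
    rw [show θ * c = t / (2 * μ) by rw [hθ_def]; field_simp, abs_of_nonneg (by positivity),
      div_le_one (by positivity)]
    exact htμ
  have hθc' : |-θ * c| ≤ 1 := by rwa [neg_mul, abs_neg]
  have hexponent : -θ * t + μ * c * θ ^ 2 = -(t ^ 2 / (4 * μ * c)) := by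
    rw [hθ_def]; field_simp; ring
  have hub : ∀ᵐ ω ∂P, Ws ω ≤ W ω + c := by
    filter_upwards [hbdd] with ω h
    linarith [(abs_le.1 h).2]
  have hsub : {ω | t ≤ |W ω - μ|} ⊆ {ω | μ + t ≤ W ω} ∪ {ω | W ω ≤ μ - t} := by
    intro ω (hω : t ≤ |W ω - μ|)
    rcases le_abs'.1 hω with h | h
    · exact Or.inr (show W ω ≤ μ - t by linarith)
    · exact Or.inl (show μ + t ≤ W ω by linarith)
  have hupper := hSB.measureReal_ge_le_exp hWm hWpos hWint hμ hc hub (μ + t) hθ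
  have hlower := hSB.measureReal_le_le_exp hWm hWsm hWpos hμ hc hbdd (μ - t) hθ
  have h1 := mul_exp_mul_sub_one_div_le hμ.le hc hθc
  have h2 := mul_exp_mul_sub_one_div_le hμ.le hc hθc'
  calc P.real {ω | t ≤ |W ω - μ|}
      ≤ P.real {ω | μ + t ≤ W ω} + P.real {ω | W ω ≤ μ - t} :=
        (measureReal_mono hsub).trans (measureReal_union_le _ _)
    _ ≤ exp (-(t ^ 2 / (4 * μ * c))) + exp (-(t ^ 2 / (4 * μ * c))) := by
        gcongr
        · exact hupper.trans (exp_le_exp.2 (by linarith))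
        · exact hlower.trans (exp_le_exp.2 (by linarith))
    _ = 2 * exp (-(t ^ 2 / (4 * μ * c))) := by ring

end IsSizeBiasCoupling

theorem two_mul_exp_le_exp_one_mul_exp {m c t s : ℝ} (hm : 0 < m) (hc : 0 < c) (hs : 0 ≤ s) :
    2 * exp (-(t ^ 2 / (4 * m * c)))
      ≤ exp 1 * exp (-(t ^ 2 / (2 * exp 1 * m * c)) * (1 - s)) := by
  have he : 2 ≤ exp 1 := by linarith [add_one_le_exp 1]
  have hq : t ^ 2 / (2 * exp 1 * m * c) ≤ t ^ 2 / (4 * m * c) := by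
    gcongr
    linarith
  have hq0 : 0 ≤ t ^ 2 / (2 * exp 1 * m * c) := by positivity
  gcongr
  nlinarith

/-- Concentration from a bounded size-bias coupling. -/
theorem stmt_15 {Ω : Type*} [MeasurableSpace Ω] (P : Measure Ω) [IsProbabilityMeasure P]
    (W Ws : Ω → ℝ) (hWm : Measurable W) (hWsm : Measurable Ws)
    (hWpos : ∀ᵐ ω ∂P, 0 ≤ W ω)
    (hWint : Integrable W P) (hμpos : 0 < ∫ x, W x ∂P)
    (hSB : IsSizeBiasCoupling P W Ws)
    (c : ℝ) (hc : 0 < c) (hbdd : ∀ᵐ ω ∂P, |Ws ω - W ω| ≤ c)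
    (t : ℝ) (ht : Real.sqrt (2 * Real.exp 1 * (∫ x, W x ∂P) * c) ≤ t) :
    P {ω | t < |W ω - ∫ x, W x ∂P|}
      ≤ ENNReal.ofReal (Real.exp 1 *
          Real.exp (-(t ^ 2 / (2 * Real.exp 1 * (∫ x, W x ∂P) * c))
            * (1 - t / (∫ x, W x ∂P) * Real.sqrt (6 / Real.exp 1)))) := by
  set μ := ∫ x, W x ∂P
  set s := t / μ * Real.sqrt (6 / Real.exp 1)
  have he : 2 ≤ exp 1 := by linarith [add_one_le_exp 1]
  have htpos : 0 < t := (Real.sqrt_pos.2 (by positivity)).trans_le ht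
  by_cases hs : 1 ≤ s
  · refine prob_le_one.trans (ENNReal.one_le_ofReal.2 ?_)
    have : 0 ≤ -(t ^ 2 / (2 * exp 1 * μ * c)) * (1 - s) :=
      mul_nonneg_of_nonpos_of_nonpos (neg_nonpos.2 (by positivity)) (by linarith)
    nlinarith [one_le_exp this]
  have htμ : t ≤ 2 * μ := by
    have h6 : 1 ≤ Real.sqrt (6 / exp 1) :=
      Real.one_le_sqrt.2 ((one_le_div (exp_pos 1)).2 (by linarith [exp_one_lt_d9]))
    have : t / μ < 1 := (le_mul_of_one_le_right (by positivity) h6).trans_lt (not_le.1 hs)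
    linarith [(div_lt_one hμpos).1 this]
  rw [← ofReal_measureReal]
  refine ENNReal.ofReal_le_ofReal ?_
  calc P.real {ω | t < |W ω - μ|} ≤ P.real {ω | t ≤ |W ω - μ|} :=
        measureReal_mono fun ω (h : t < _) => h.le
    _ ≤ 2 * exp (-(t ^ 2 / (4 * μ * c))) :=
        hSB.measureReal_le_abs_sub_integral_le hWm hWsm hWpos hWint hμpos hc hbdd htpos.le htμ
    _ ≤ _ := two_mul_exp_le_exp_one_mul_exp hμpos hc (by positivity)
end

section
/- Let 𝓘 be a finite index set, ℰ a random (possibly empty) subset of 𝓘, and E := |ℰ|. Let {Y_i}_{i∈𝓘} be a collection of real random variables that is independent of ℰ, and let ℓ be a positive integer with max_{i∈𝓘} ‖Y_i‖_ℓ ≤ y for some y ≥ 0. Then ‖Σ_{i∈ℰ} Y_i‖_ℓ ≤ y·‖E‖_ℓ. -/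
/-!
Independence makes the joint law of `ℰ` and `(Y_i)` a product measure, so `E|∑_{i∈ℰ} Y_i|^ℓ`
is at most the average, over the law of `ℰ`, of `E|∑_{i∈A} Y_i|^ℓ` for fixed sets `A`.
Minkowski bounds each of these by `(y·|A|)^ℓ`, and the average of `(y·|A|)^ℓ` is `y^ℓ·E[E^ℓ]`.
-/

open MeasureTheory ProbabilityTheory Real

open scoped ENNReal

section Independence

variable {Ω α β : Type*} [MeasurableSpace Ω] [MeasurableSpace α] [MeasurableSpace β]
  {P : Measure Ω} [IsFiniteMeasure P] {X : Ω → α} {Z : Ω → β}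

theorem lintegral_comp_le_of_indepFun (hX : AEMeasurable X P) (hZ : AEMeasurable Z P)
    (hXZ : IndepFun X Z P) {g : α → β → ℝ≥0∞} (hg : Measurable (Function.uncurry g))
    {h : α → ℝ≥0∞} (hh : Measurable h) (hgh : ∀ a, ∫⁻ ω, g a (Z ω) ∂P ≤ h a) :
    ∫⁻ ω, g (X ω) (Z ω) ∂P ≤ ∫⁻ ω, h (X ω) ∂P :=
  calc ∫⁻ ω, g (X ω) (Z ω) ∂P
      = ∫⁻ x, Function.uncurry g x ∂(P.map fun ω => (X ω, Z ω)) :=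
        (lintegral_map' hg.aemeasurable (hX.prodMk hZ)).symm
    _ = ∫⁻ x, Function.uncurry g x ∂((P.map X).prod (P.map Z)) := by
        rw [hXZ.map_prod_eq_prod_map_map hX hZ]
    _ ≤ ∫⁻ a, ∫⁻ b, g a b ∂(P.map Z) ∂(P.map X) := lintegral_prod_le _
    _ ≤ ∫⁻ a, h a ∂(P.map X) := lintegral_mono fun a => by
        rw [lintegral_map' hg.of_uncurry_left.aemeasurable hZ]
        exact hgh a
    _ = ∫⁻ ω, h (X ω) ∂P := lintegral_map' hh.aemeasurable hX

theorem eLpNorm_comp_le_of_indepFun {E F : Type*} [NormedAddCommGroup E] [MeasurableSpace E]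
    [OpensMeasurableSpace E] [NormedAddCommGroup F] [MeasurableSpace F] [OpensMeasurableSpace F]
    (hX : AEMeasurable X P) (hZ : AEMeasurable Z P) (hXZ : IndepFun X Z P)
    {p : ℝ≥0∞} (hp0 : p ≠ 0) (hptop : p ≠ ∞) {f : α → β → E} (hf : Measurable (Function.uncurry f))
    {g : α → F} (hg : Measurable g) (hfg : ∀ a, eLpNorm (fun ω => f a (Z ω)) p P ≤ ‖g a‖ₑ) :
    eLpNorm (fun ω => f (X ω) (Z ω)) p P ≤ eLpNorm (fun ω => g (X ω)) p P := by
  have hp : 0 < p.toReal := ENNReal.toReal_pos hp0 hptop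
  simp only [eLpNorm_eq_lintegral_rpow_enorm_toReal hp0 hptop, one_div] at hfg ⊢
  refine ENNReal.rpow_le_rpow ?_ (inv_nonneg.2 hp.le)
  exact lintegral_comp_le_of_indepFun hX hZ hXZ (g := fun a b => ‖f a b‖ₑ ^ p.toReal)
    (hf.enorm.pow_const _) (hg.enorm.pow_const _)
    fun a => (ENNReal.rpow_inv_le_iff hp).1 (hfg a)

end Independence

theorem eLpNorm_sum_le_card_mul {Ω ι E : Type*} [MeasurableSpace Ω] [NormedAddCommGroup E]
    {μ : Measure Ω} {p : ℝ≥0∞} (hp : 1 ≤ p) {s : Finset ι} {f : ι → Ω → E}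
    (hf : ∀ i ∈ s, AEStronglyMeasurable (f i) μ) {C : ℝ≥0∞}
    (hC : ∀ i ∈ s, eLpNorm (f i) p μ ≤ C) :
    eLpNorm (fun ω => ∑ i ∈ s, f i ω) p μ ≤ s.card * C := by
  rw [← Finset.sum_fn, ← nsmul_eq_mul]
  exact (eLpNorm_sum_le hf hp).trans (Finset.sum_le_card_nsmul _ _ _ hC)

theorem measurable_sum_filter {ι M : Type*} [Fintype ι] [AddCommMonoid M] [MeasurableSpace M]
    [MeasurableAdd₂ M] :
    Measurable fun q : (ι → Bool) × (ι → M) =>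
      ∑ i ∈ Finset.univ.filter (fun i => q.1 i = true), q.2 i :=
  measurable_from_prod_countable_right fun b =>
    Finset.measurable_sum (Finset.univ.filter fun i => b i = true) fun i _ => measurable_pi_apply i

theorem rnorm_eq_toReal_eLpNorm_s17 {Ω : Type*} [MeasurableSpace Ω] {P : Measure Ω} {X : Ω → ℝ}
    (hX : AEStronglyMeasurable X P) {r : ℕ} (hr : r ≠ 0) :
    rnorm P X r = (eLpNorm X r P).toReal := by
  rw [rnorm, eLpNorm_eq_lintegral_rpow_enorm_toReal (by exact_mod_cast hr)
      (ENNReal.natCast_ne_top r), ENNReal.toReal_natCast, ← ENNReal.toReal_rpow, one_div,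
    integral_eq_lintegral_of_nonneg_ae (f := fun ω => |X ω| ^ r)
      (ae_of_all _ fun ω => by positivity) (hX.norm.pow r)]
  congr 3 with ω
  simp [← Real.norm_eq_abs, ← ofReal_norm, ENNReal.ofReal_pow]

theorem eLpNorm_le_ofReal_of_rnorm_le {Ω : Type*} [MeasurableSpace Ω] {P : Measure Ω}
    {X : Ω → ℝ} (hX : AEStronglyMeasurable X P) {r : ℕ} (hr : r ≠ 0)
    (hXr : Integrable (fun ω => |X ω| ^ r) P) {y : ℝ} (hy : 0 ≤ y) (hXy : rnorm P X r ≤ y) :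
    eLpNorm X r P ≤ ENNReal.ofReal y := by
  have hXLr : MemLp X r P :=
    (integrable_norm_rpow_iff hX (by exact_mod_cast hr) (ENNReal.natCast_ne_top r)).1
      (by simpa using hXr)
  rwa [ENNReal.le_ofReal_iff_toReal_le hXLr.eLpNorm_ne_top hy, ← rnorm_eq_toReal_eLpNorm_s17 hX hr]

/-- **Lemma (conditional Minkowski)**: for a random subset `ℰ` of a finite index set
(encoded by its indicator function), independent of the family `{Y_i}`, the `ℓ`-norm of
`∑_{i∈ℰ} Y_i` is at most `y·‖|ℰ|‖_ℓ` whenever `max_i ‖Y_i‖_ℓ ≤ y`. -/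
theorem stmt_17 {Ω : Type*} [MeasurableSpace Ω] (P : Measure Ω) [IsProbabilityMeasure P]
    {ι : Type*} [Fintype ι]
    (ℰ : Ω → ι → Bool) (hℰm : Measurable ℰ)
    (Y : ι → Ω → ℝ) (hYm : ∀ i, Measurable (Y i))
    (hindep : IndepFun ℰ (fun ω i => Y i ω) P)
    (ℓ : ℕ) (hℓ : 1 ≤ ℓ)
    (hYint : ∀ i, Integrable (fun ω => |Y i ω| ^ ℓ) P)
    (y : ℝ) (hy : 0 ≤ y) (hYbd : ∀ i, rnorm P (Y i) ℓ ≤ y) :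
    rnorm P (fun ω => ∑ i ∈ Finset.univ.filter (fun i => ℰ ω i = true), Y i ω) ℓ
      ≤ y * rnorm P
          (fun ω => ((Finset.univ.filter (fun i => ℰ ω i = true)).card : ℝ)) ℓ := by
  have hℓ0 : ℓ ≠ 0 := by omega
  have hZ : Measurable fun ω i => Y i ω := measurable_pi_lambda _ hYm
  set S : Ω → ℝ := fun ω => ∑ i ∈ Finset.univ.filter (fun i => ℰ ω i = true), Y i ω
  have hS : Measurable S := measurable_sum_filter.comp (hℰm.prodMk hZ)
  set N : Ω → ℝ := fun ω => ((Finset.univ.filter (fun i => ℰ ω i = true)).card : ℝ)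
  have hN : Measurable N :=
    (measurable_of_countable fun b : ι → Bool =>
      ((Finset.univ.filter (fun i => b i = true)).card : ℝ)).comp hℰm
  have hY : ∀ i, eLpNorm (Y i) ℓ P ≤ ENNReal.ofReal y := fun i =>
    eLpNorm_le_ofReal_of_rnorm_le (hYm i).aestronglyMeasurable hℓ0 (hYint i) hy (hYbd i)
  have hSN : eLpNorm S ℓ P ≤ eLpNorm (fun ω => y * N ω) ℓ P :=
    eLpNorm_comp_le_of_indepFun hℰm.aemeasurable hZ.aemeasurable hindep
      (f := fun b v => ∑ i ∈ Finset.univ.filter (fun i => b i = true), v i)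
      (g := fun b => y * ((Finset.univ.filter (fun i => b i = true)).card : ℝ))
      (by exact_mod_cast hℓ0) (ENNReal.natCast_ne_top ℓ) measurable_sum_filter
      (measurable_of_countable _) fun b => by
    rw [Real.enorm_eq_ofReal (by positivity), ENNReal.ofReal_mul hy, ENNReal.ofReal_natCast,
      mul_comm]
    exact eLpNorm_sum_le_card_mul (by exact_mod_cast hℓ) (fun i _ => (hYm i).aestronglyMeasurable)
      fun i _ => hY i
  have hNℓ : MemLp N ℓ P := MemLp.of_bound hN.aestronglyMeasurable (Fintype.card ι)
    (ae_of_all _ fun ω => by simp [N, Finset.card_le_univ])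
  rw [rnorm_eq_toReal_eLpNorm_s17 hS.aestronglyMeasurable hℓ0,
    rnorm_eq_toReal_eLpNorm_s17 hN.aestronglyMeasurable hℓ0]
  calc _ ≤ (eLpNorm (y • N) ℓ P).toReal :=
        ENNReal.toReal_mono (hNℓ.const_smul y).eLpNorm_ne_top hSN
    _ = y * (eLpNorm N ℓ P).toReal := by
        rw [eLpNorm_const_smul, ENNReal.toReal_mul, toReal_enorm, Real.norm_of_nonneg hy]
end
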